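/- arXiv:1909.11322 — 6 statements merged into one kernel-verified Lean document; each statement's English description precedes it below -/
import Mathlib

section
/- Let S, S₁, S₂ be i.i.d. real random variables with a common continuous distribution symmetric about 0, and set X₁ = S + S₁, X₂ = S + S₂. Then P(X₁ > 0 and X₂ > 0) = 1/3. -/
open MeasureTheory ProbabilityTheory

/-- The set where coordinate `i` is the strict minimum. -/
def Amin (i : Fin 3) : Set (Fin 3 → ℝ) := {x | ∀ j, j ≠ i → x i < x j}

/-- For i.i.d. symmetric `S, S₁, S₂` with continuous common CDF,
`P(S + S₁ > 0 and S + S₂ > 0) = 1/3`. -/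
theorem prob_both_pos
    {Ω : Type*} [MeasurableSpace Ω] (μ : Measure Ω) [IsProbabilityMeasure μ]
    (f : Fin 3 → Ω → ℝ) (hmeas : ∀ i, Measurable (f i))
    (hindep : iIndepFun f μ)
    (hident : ∀ i, Measure.map (f i) μ = Measure.map (f 0) μ)
    (hsymm : Measure.map (f 0) μ = Measure.map (fun ω => -f 0 ω) μ)
    (hcont : Continuous fun x => (μ {ω | f 0 ω ≤ x}).toReal) :
    μ {ω | 0 < f 0 ω + f 1 ω ∧ 0 < f 0 ω + f 2 ω} = 1 / 3 := by
  classical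
  have hfin : ∀ j : Fin 3, j = 0 ∨ j = 1 ∨ j = 2 := by decide
  set ν : Measure ℝ := μ.map (f 0) with hν
  haveI hprobν : IsProbabilityMeasure ν := Measure.isProbabilityMeasure_map (hmeas 0).aemeasurable
  -- the CDF of ν is continuous
  have hcdf_eq : ⇑(cdf ν) = fun x => (μ {ω | f 0 ω ≤ x}).toReal := by
    funext x
    rw [cdf_eq_real, Measure.real, hν, Measure.map_apply (hmeas 0) measurableSet_Iic]
    rfl
  have hcdf_cont : Continuous (cdf ν) := by rw [hcdf_eq]; exact hcont
  -- ν has no atoms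
  have hatom : ∀ a : ℝ, ν {a} = 0 := by
    intro a
    have h1 : Function.leftLim (cdf ν) a = cdf ν a :=
      leftLim_eq_of_tendsto
        ((hcdf_cont.tendsto a).mono_left nhdsWithin_le_nhds)
    calc ν {a} = (cdf ν).measure {a} := by rw [measure_cdf]
    _ = ENNReal.ofReal (cdf ν a - Function.leftLim (cdf ν) a) :=
        StieltjesFunction.measure_singleton _ a
    _ = 0 := by rw [h1]; simp
  -- the joint law is the product measure
  set π : Measure (Fin 3 → ℝ) := Measure.pi (fun _ : Fin 3 => ν) with hπ
  set g : Ω → Fin 3 → ℝ := fun ω i => f i ω with hgdef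
  have hg : Measurable g := measurable_pi_iff.mpr hmeas
  have hjoint : π = μ.map g := by
    refine Measure.pi_eq fun s hs => ?_
    rw [Measure.map_apply hg (MeasurableSet.univ_pi hs)]
    have hpre : g ⁻¹' Set.pi Set.univ s = ⋂ i, f i ⁻¹' s i := by
      ext ω; simp [hgdef, Set.mem_pi]
    rw [hpre, hindep.meas_iInter fun i => ⟨s i, hs i, rfl⟩]
    exact Finset.prod_congr rfl fun i _ => by
      rw [← Measure.map_apply (hmeas i) (hs i), hident i]
  -- coordinate permutations preserve π
  have hTm : ∀ e : Fin 3 ≃ Fin 3, Measurable (fun (x : Fin 3 → ℝ) (i : Fin 3) => x (e i)) :=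
    fun e => measurable_pi_iff.mpr fun i => measurable_pi_apply _
  have hmap : ∀ e : Fin 3 ≃ Fin 3,
      π.map (fun (x : Fin 3 → ℝ) (i : Fin 3) => x (e i)) = π := by
    intro e
    refine (Measure.pi_eq fun s hs => ?_).symm
    rw [Measure.map_apply (hTm e) (MeasurableSet.univ_pi hs)]
    have hpre : (fun (x : Fin 3 → ℝ) (i : Fin 3) => x (e i)) ⁻¹' Set.pi Set.univ s
        = Set.pi Set.univ fun j => s (e.symm j) := by
      ext x
      simp only [Set.mem_preimage, Set.mem_pi, Set.mem_univ, forall_true_left]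
      constructor
      · intro h j; have := h (e.symm j); simpa using this
      · intro h i; have := h (e i); simpa using this
    rw [hpre, Measure.pi_pi]
    exact Equiv.prod_comp e.symm fun i => ν (s i)
  have hperm : ∀ (e : Fin 3 ≃ Fin 3) (B : Set (Fin 3 → ℝ)), MeasurableSet B →
      π ((fun (x : Fin 3 → ℝ) (i : Fin 3) => x (e i)) ⁻¹' B) = π B := by
    intro e B hB
    rw [← Measure.map_apply (hTm e) hB, hmap e]
  -- diagonals are null
  have hm2 : Measurable fun x : Fin 3 → ℝ => (x 0, x 1) :=
    (measurable_pi_apply 0).prodMk (measurable_pi_apply 1)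
  have hdm : MeasurableSet {p : ℝ × ℝ | p.1 = p.2} :=
    measurableSet_eq_fun measurable_fst measurable_snd
  have hprod : π.map (fun x : Fin 3 → ℝ => (x 0, x 1)) = ν.prod ν := by
    refine (Measure.prod_eq fun s t hs ht => ?_).symm
    rw [Measure.map_apply hm2 (hs.prod ht)]
    have hpre : (fun x : Fin 3 → ℝ => (x 0, x 1)) ⁻¹' (s ×ˢ t)
        = Set.pi Set.univ (fun k => if k = 0 then s else if k = 1 then t else Set.univ) := by
      ext x
      constructor
      · rintro ⟨h1, h2⟩ j _
        rcases hfin j with rfl | rfl | rfl <;> simp [h1, h2]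
      · intro h
        exact ⟨by simpa using h 0 (Set.mem_univ _), by simpa using h 1 (Set.mem_univ _)⟩
    rw [hpre, Measure.pi_pi, Fin.prod_univ_three]
    simp [show (2:Fin 3) ≠ 0 from by decide, show (2:Fin 3) ≠ 1 from by decide,
      show (1:Fin 3) ≠ 0 from by decide]
  have hdiag01 : π {x : Fin 3 → ℝ | x 0 = x 1} = 0 := by
    have heq : {x : Fin 3 → ℝ | x 0 = x 1}
        = (fun x : Fin 3 → ℝ => (x 0, x 1)) ⁻¹' {p : ℝ × ℝ | p.1 = p.2} := rfl
    rw [heq, ← Measure.map_apply hm2 hdm, hprod, Measure.prod_apply hdm]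
    have hsing : ∀ a : ℝ, (Prod.mk a ⁻¹' {p : ℝ × ℝ | p.1 = p.2}) = {a} := by
      intro a; ext y; simp [eq_comm]
    simp only [hsing, hatom]
    simp
  have hdm01 : MeasurableSet {x : Fin 3 → ℝ | x 0 = x 1} :=
    measurableSet_eq_fun (measurable_pi_apply 0) (measurable_pi_apply 1)
  have hdiagE : ∀ e : Fin 3 ≃ Fin 3,
      π {x : Fin 3 → ℝ | x (e 0) = x (e 1)} = π {x : Fin 3 → ℝ | x 0 = x 1} :=
    fun e => hperm e {x : Fin 3 → ℝ | x 0 = x 1} hdm01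
  have hdiag02 : π {x : Fin 3 → ℝ | x 0 = x 2} = 0 := by
    have h := hdiagE (Equiv.swap 1 2)
    rw [show (Equiv.swap (1 : Fin 3) 2) 0 = 0 from by decide,
      show (Equiv.swap (1 : Fin 3) 2) 1 = 2 from by decide, hdiag01] at h
    exact h
  have hdiag12 : π {x : Fin 3 → ℝ | x 1 = x 2} = 0 := by
    have h := hdiagE ((Equiv.swap 0 1).trans (Equiv.swap 0 2))
    rw [show ((Equiv.swap (0 : Fin 3) 1).trans (Equiv.swap 0 2)) 0 = 1 from by decide,
      show ((Equiv.swap (0 : Fin 3) 1).trans (Equiv.swap 0 2)) 1 = 2 from by decide,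
      hdiag01] at h
    exact h
  -- the Amin sets
  have hAmeas : ∀ i, MeasurableSet (Amin i) := by
    intro i
    have h : Amin i = ⋂ j, ⋂ (_ : j ≠ i), {x : Fin 3 → ℝ | x i < x j} := by
      ext x; simp [Amin]
    rw [h]
    exact MeasurableSet.iInter fun j => MeasurableSet.iInter fun _ =>
      measurableSet_lt (measurable_pi_apply i) (measurable_pi_apply j)
  have hApre : ∀ (e : Fin 3 ≃ Fin 3) (i : Fin 3),
      (fun (x : Fin 3 → ℝ) (k : Fin 3) => x (e k)) ⁻¹' Amin i = Amin (e i) := by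
    intro e i
    ext x
    constructor
    · intro h k hk
      have hj : e.symm k ≠ i := fun hji => hk (by rw [← hji, e.apply_symm_apply])
      have := h (e.symm k) hj
      simpa using this
    · intro h j hj
      have : x (e i) < x (e j) := h (e j) fun h' => hj (e.injective h')
      exact this
  have hAeq : ∀ (e : Fin 3 ≃ Fin 3) (i : Fin 3), π (Amin (e i)) = π (Amin i) := by
    intro e i
    rw [← hApre e i]
    exact hperm e (Amin i) (hAmeas i)
  have hA1 : π (Amin 1) = π (Amin 0) := by
    have h := hAeq (Equiv.swap 0 1) 0
    rwa [show (Equiv.swap (0 : Fin 3) 1) 0 = 1 from by decide] at h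
  have hA2 : π (Amin 2) = π (Amin 0) := by
    have h := hAeq (Equiv.swap 0 2) 0
    rwa [show (Equiv.swap (0 : Fin 3) 2) 0 = 2 from by decide] at h
  -- disjointness and covering
  have hdisj : ∀ i j : Fin 3, i ≠ j → Disjoint (Amin i) (Amin j) := by
    intro i j hij
    rw [Set.disjoint_left]
    intro x hxi hxj
    exact lt_asymm (hxi j (Ne.symm hij)) (hxj i hij)
  have hcover : (Set.univ : Set (Fin 3 → ℝ)) ⊆ (Amin 0 ∪ Amin 1 ∪ Amin 2) ∪
      ({x : Fin 3 → ℝ | x 0 = x 1} ∪ {x : Fin 3 → ℝ | x 0 = x 2} ∪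
        {x : Fin 3 → ℝ | x 1 = x 2}) := by
    intro x _
    rcases lt_trichotomy (x 0) (x 1) with h01 | h01 | h01
    · rcases lt_trichotomy (x 0) (x 2) with h02 | h02 | h02
      · refine Or.inl (Or.inl (Or.inl ?_))
        intro j hj
        rcases hfin j with rfl | rfl | rfl
        · exact absurd rfl hj
        · exact h01
        · exact h02
      · exact Or.inr (Or.inl (Or.inr h02))
      · refine Or.inl (Or.inr ?_)
        intro j hj
        rcases hfin j with rfl | rfl | rfl
        · exact h02
        · linarith
        · exact absurd rfl hj
    · exact Or.inr (Or.inl (Or.inl h01))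
    · rcases lt_trichotomy (x 1) (x 2) with h12 | h12 | h12
      · refine Or.inl (Or.inl (Or.inr ?_))
        intro j hj
        rcases hfin j with rfl | rfl | rfl
        · exact h01
        · exact absurd rfl hj
        · exact h12
      · exact Or.inr (Or.inr h12)
      · refine Or.inl (Or.inr ?_)
        intro j hj
        rcases hfin j with rfl | rfl | rfl
        · linarith
        · exact h12
        · exact absurd rfl hj
  have hDnull : π ({x : Fin 3 → ℝ | x 0 = x 1} ∪ {x : Fin 3 → ℝ | x 0 = x 2} ∪
      {x : Fin 3 → ℝ | x 1 = x 2}) = 0 :=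
    measure_union_null (measure_union_null hdiag01 hdiag02) hdiag12
  have hsum : π (Amin 0) + π (Amin 1) + π (Amin 2) = 1 := by
    have hle : (1 : ENNReal) ≤ π (Amin 0 ∪ Amin 1 ∪ Amin 2) := by
      calc (1 : ENNReal) = π Set.univ := measure_univ.symm
      _ ≤ π ((Amin 0 ∪ Amin 1 ∪ Amin 2) ∪
          ({x : Fin 3 → ℝ | x 0 = x 1} ∪ {x : Fin 3 → ℝ | x 0 = x 2} ∪
            {x : Fin 3 → ℝ | x 1 = x 2})) := measure_mono hcover
      _ ≤ π (Amin 0 ∪ Amin 1 ∪ Amin 2) + π ({x : Fin 3 → ℝ | x 0 = x 1} ∪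
          {x : Fin 3 → ℝ | x 0 = x 2} ∪ {x : Fin 3 → ℝ | x 1 = x 2}) := measure_union_le _ _
      _ = π (Amin 0 ∪ Amin 1 ∪ Amin 2) := by rw [hDnull, add_zero]
    have hU : π (Amin 0 ∪ Amin 1 ∪ Amin 2) = 1 := le_antisymm prob_le_one hle
    rw [← hU, measure_union ((hdisj 0 2 (by decide)).union_left (hdisj 1 2 (by decide)))
      (hAmeas 2), measure_union (hdisj 0 1 (by decide)) (hAmeas 1)]
  have hA0 : π (Amin 0) = 1 / 3 := by
    rw [ENNReal.eq_div_iff (by norm_num) (by norm_num)]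
    rw [← hsum, hA1, hA2]
    ring
  -- flipping the sign of the first coordinate
  have hnegν : ν.map (fun y : ℝ => -y) = ν := by
    rw [hν, Measure.map_map measurable_neg (hmeas 0)]
    exact hsymm.symm
  set F : Fin 3 → ℝ → ℝ := fun i y => if i = 0 then -y else y with hF
  have hFmp : ∀ i, MeasurePreserving (F i) ν ν := by
    intro i
    by_cases h : i = 0
    · have hFi : F i = fun y => -y := by funext y; simp [hF, h]
      rw [hFi]
      exact ⟨measurable_neg, hnegν⟩
    · have hFi : F i = id := by funext y; simp [hF, h]
      rw [hFi]
      exact MeasurePreserving.id ν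
  have hT : MeasurePreserving (fun (a : Fin 3 → ℝ) (i : Fin 3) => F i (a i)) π π :=
    measurePreserving_pi _ _ hFmp
  have hEmeas : MeasurableSet {x : Fin 3 → ℝ | 0 < x 0 + x 1 ∧ 0 < x 0 + x 2} :=
    (measurableSet_lt measurable_const
      ((measurable_pi_apply 0).add (measurable_pi_apply 1))).inter
    (measurableSet_lt measurable_const
      ((measurable_pi_apply 0).add (measurable_pi_apply 2)))
  have hpreE : (fun (a : Fin 3 → ℝ) (i : Fin 3) => F i (a i)) ⁻¹'
      {x : Fin 3 → ℝ | 0 < x 0 + x 1 ∧ 0 < x 0 + x 2} = Amin 0 := by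
    ext x
    have h0 : F 0 (x 0) = -x 0 := by simp [hF]
    have h1 : F 1 (x 1) = x 1 := by simp [hF]
    have h2 : F 2 (x 2) = x 2 := by simp [hF]
    simp only [Set.mem_preimage, Set.mem_setOf_eq, h0, h1, h2]
    constructor
    · rintro ⟨ha, hb⟩ j hj
      rcases hfin j with rfl | rfl | rfl
      · exact absurd rfl hj
      · linarith
      · linarith
    · intro h
      have ha := h 1 (by decide)
      have hb := h 2 (by decide)
      exact ⟨by linarith, by linarith⟩
  have hflip : π {x : Fin 3 → ℝ | 0 < x 0 + x 1 ∧ 0 < x 0 + x 2} = π (Amin 0) := by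
    rw [← hT.measure_preimage hEmeas.nullMeasurableSet, hpreE]
  calc μ {ω | 0 < f 0 ω + f 1 ω ∧ 0 < f 0 ω + f 2 ω}
      = μ.map g {x : Fin 3 → ℝ | 0 < x 0 + x 1 ∧ 0 < x 0 + x 2} := by
        rw [Measure.map_apply hg hEmeas]; rfl
    _ = π {x : Fin 3 → ℝ | 0 < x 0 + x 1 ∧ 0 < x 0 + x 2} := by rw [← hjoint]
    _ = π (Amin 0) := hflip
    _ = 1 / 3 := hA0
end

section
/- Let S, S₁, S₂ be i.i.d. real random variables with a common continuous distribution symmetric about 0, and set X₁ = S + S₁, X₂ = S + S₂. Then E[sgn(X₁)·sgn(X₂)] = 1/3. -/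
open MeasureTheory ProbabilityTheory Set Filter
open scoped ENNReal

section aux

variable (ν : Measure ℝ) [IsProbabilityMeasure ν]

private lemma meas_eq_fun {α : Type*} [MeasurableSpace α] {a b : α → ℝ}
    (ha : Measurable a) (hb : Measurable b) : MeasurableSet {p | a p = b p} := by
  have : {p | a p = b p} = (fun p => a p - b p) ⁻¹' {0} := by
    ext p; simp [sub_eq_zero]
  rw [this]
  exact (ha.sub hb) (measurableSet_singleton 0)

private lemma diag_null (hatom : ∀ x : ℝ, ν {x} = 0) :
    ν.prod ν {q : ℝ × ℝ | q.1 = q.2} = 0 := by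
  rw [Measure.prod_apply
    (meas_eq_fun (show Measurable fun q : ℝ × ℝ => q.1 from measurable_fst)
      (show Measurable fun q : ℝ × ℝ => q.2 from measurable_snd))]
  have h : ∀ a : ℝ, ν (Prod.mk a ⁻¹' {q : ℝ × ℝ | q.1 = q.2}) = 0 := by
    intro a
    have he : Prod.mk a ⁻¹' {q : ℝ × ℝ | q.1 = q.2} = {a} := by
      ext b; simp [eq_comm]
    rw [he, hatom]
  simp only [h, lintegral_zero]

private lemma slice1_null (hatom : ∀ x : ℝ, ν {x} = 0) (c : ℝ → ℝ) (hc : Measurable c) :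
    ν.prod (ν.prod ν) {p : ℝ × ℝ × ℝ | p.2.1 = c p.1} = 0 := by
  rw [Measure.prod_apply
    (meas_eq_fun (show Measurable fun p : ℝ × ℝ × ℝ => p.2.1 from measurable_snd.fst)
      (show Measurable fun p : ℝ × ℝ × ℝ => c p.1 from hc.comp measurable_fst))]
  have h : ∀ s : ℝ, (ν.prod ν) (Prod.mk s ⁻¹' {p : ℝ × ℝ × ℝ | p.2.1 = c p.1}) = 0 := by
    intro s
    have he : Prod.mk s ⁻¹' {p : ℝ × ℝ × ℝ | p.2.1 = c p.1} = {c s} ×ˢ (univ : Set ℝ) := by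
      ext q
      simp only [Set.mem_preimage, Set.mem_setOf_eq, Set.mem_prod, Set.mem_singleton_iff,
        Set.mem_univ, and_true]
    rw [he, Measure.prod_prod, hatom, zero_mul]
  simp only [h, lintegral_zero]

private lemma slice2_null (hatom : ∀ x : ℝ, ν {x} = 0) (c : ℝ → ℝ) (hc : Measurable c) :
    ν.prod (ν.prod ν) {p : ℝ × ℝ × ℝ | p.2.2 = c p.1} = 0 := by
  rw [Measure.prod_apply
    (meas_eq_fun (show Measurable fun p : ℝ × ℝ × ℝ => p.2.2 from measurable_snd.snd)
      (show Measurable fun p : ℝ × ℝ × ℝ => c p.1 from hc.comp measurable_fst))]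
  have h : ∀ s : ℝ, (ν.prod ν) (Prod.mk s ⁻¹' {p : ℝ × ℝ × ℝ | p.2.2 = c p.1}) = 0 := by
    intro s
    have he : Prod.mk s ⁻¹' {p : ℝ × ℝ × ℝ | p.2.2 = c p.1} = (univ : Set ℝ) ×ˢ {c s} := by
      ext q
      simp only [Set.mem_preimage, Set.mem_setOf_eq, Set.mem_prod, Set.mem_singleton_iff,
        Set.mem_univ, true_and]
    rw [he, Measure.prod_prod, measure_univ, hatom, one_mul]
  simp only [h, lintegral_zero]

private lemma slice3_null (hatom : ∀ x : ℝ, ν {x} = 0) :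
    ν.prod (ν.prod ν) {p : ℝ × ℝ × ℝ | p.2.1 = p.2.2} = 0 := by
  rw [Measure.prod_apply
    (meas_eq_fun (show Measurable fun p : ℝ × ℝ × ℝ => p.2.1 from measurable_snd.fst)
      (show Measurable fun p : ℝ × ℝ × ℝ => p.2.2 from measurable_snd.snd))]
  have h : ∀ s : ℝ, (ν.prod ν) (Prod.mk s ⁻¹' {p : ℝ × ℝ × ℝ | p.2.1 = p.2.2}) = 0 := by
    intro s
    have he : Prod.mk s ⁻¹' {p : ℝ × ℝ × ℝ | p.2.1 = p.2.2} = {q : ℝ × ℝ | q.1 = q.2} := rfl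
    rw [he, diag_null ν hatom]
  simp only [h, lintegral_zero]

/-- swap of second and third coordinates preserves the product measure -/
private lemma map_swap23 :
    (ν.prod (ν.prod ν)).map (Prod.map id Prod.swap) = ν.prod (ν.prod ν) := by
  rw [← Measure.map_prod_map _ _ measurable_id measurable_swap, Measure.map_id,
    Measure.prod_swap]

private lemma meas_perm12 :
    Measurable (fun p : ℝ × ℝ × ℝ => (p.2.1, (p.1, p.2.2))) :=
  (measurable_snd.fst).prodMk (measurable_fst.prodMk measurable_snd.snd)

/-- swap of first and second coordinates preserves the product measure -/
private lemma map_perm12 :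
    (ν.prod (ν.prod ν)).map (fun p : ℝ × ℝ × ℝ => (p.2.1, (p.1, p.2.2)))
      = ν.prod (ν.prod ν) := by
  have hψ : Measurable (fun q : (ℝ × ℝ) × ℝ => (q.1.1, (q.2, q.1.2))) :=
    (measurable_fst.fst).prodMk (measurable_snd.prodMk measurable_fst.snd)
  have m3 : Measurable (Prod.map (id : ℝ → ℝ) (Prod.swap : ℝ × ℝ → ℝ × ℝ)) :=
    measurable_id.prodMap measurable_swap
  have m2 : Measurable (⇑(MeasurableEquiv.prodAssoc : (ℝ × ℝ) × ℝ ≃ᵐ ℝ × ℝ × ℝ)) :=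
    MeasurableEquiv.measurable _
  calc (ν.prod (ν.prod ν)).map (fun p : ℝ × ℝ × ℝ => (p.2.1, (p.1, p.2.2)))
      = ((ν.prod (ν.prod ν)).map Prod.swap).map
          (fun q : (ℝ × ℝ) × ℝ => (q.1.1, (q.2, q.1.2))) := by
        rw [Measure.map_map hψ measurable_swap]; rfl
    _ = ((ν.prod ν).prod ν).map (fun q : (ℝ × ℝ) × ℝ => (q.1.1, (q.2, q.1.2))) := by
        rw [Measure.prod_swap]
    _ = (((ν.prod ν).prod ν).map (⇑MeasurableEquiv.prodAssoc)).map (Prod.map id Prod.swap) := by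
        rw [Measure.map_map m3 m2]; rfl
    _ = (ν.prod (ν.prod ν)).map (Prod.map id Prod.swap) := by
        rw [Measure.prodAssoc_prod]
    _ = ν.prod (ν.prod ν) := map_swap23 ν

/-- the probability that the first coordinate is the strict minimum is 1/3 -/
private lemma pi_min (hatom : ∀ x : ℝ, ν {x} = 0) :
    ν.prod (ν.prod ν) {p : ℝ × ℝ × ℝ | p.1 < p.2.1 ∧ p.1 < p.2.2} = 1 / 3 := by
  have mfst : Measurable fun p : ℝ × ℝ × ℝ => p.1 := measurable_fst
  have msnd1 : Measurable fun p : ℝ × ℝ × ℝ => p.2.1 := measurable_snd.fst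
  have msnd2 : Measurable fun p : ℝ × ℝ × ℝ => p.2.2 := measurable_snd.snd
  have hA1m : MeasurableSet {p : ℝ × ℝ × ℝ | p.1 < p.2.1 ∧ p.1 < p.2.2} :=
    (measurableSet_lt mfst msnd1).inter (measurableSet_lt mfst msnd2)
  have hA2m : MeasurableSet {p : ℝ × ℝ × ℝ | p.2.1 < p.1 ∧ p.2.1 < p.2.2} :=
    (measurableSet_lt msnd1 mfst).inter (measurableSet_lt msnd1 msnd2)
  have hA3m : MeasurableSet {p : ℝ × ℝ × ℝ | p.2.2 < p.1 ∧ p.2.2 < p.2.1} :=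
    (measurableSet_lt msnd2 mfst).inter (measurableSet_lt msnd2 msnd1)
  have h21 : ν.prod (ν.prod ν) {p : ℝ × ℝ × ℝ | p.2.1 < p.1 ∧ p.2.1 < p.2.2}
      = ν.prod (ν.prod ν) {p : ℝ × ℝ × ℝ | p.1 < p.2.1 ∧ p.1 < p.2.2} := by
    conv_lhs => rw [← map_perm12 ν]
    rw [Measure.map_apply (meas_perm12) hA2m]
    rfl
  have h32 : ν.prod (ν.prod ν) {p : ℝ × ℝ × ℝ | p.2.2 < p.1 ∧ p.2.2 < p.2.1}
      = ν.prod (ν.prod ν) {p : ℝ × ℝ × ℝ | p.2.1 < p.1 ∧ p.2.1 < p.2.2} := by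
    conv_lhs => rw [← map_swap23 ν]
    rw [Measure.map_apply (measurable_id.prodMap measurable_swap) hA3m]
    rfl
  have hd12 : Disjoint {p : ℝ × ℝ × ℝ | p.1 < p.2.1 ∧ p.1 < p.2.2}
      {p : ℝ × ℝ × ℝ | p.2.1 < p.1 ∧ p.2.1 < p.2.2} := by
    rw [Set.disjoint_left]
    rintro p ⟨h1, _⟩ ⟨h2, _⟩
    exact absurd (h1.trans h2) (lt_irrefl _)
  have hd3 : Disjoint ({p : ℝ × ℝ × ℝ | p.1 < p.2.1 ∧ p.1 < p.2.2}
      ∪ {p : ℝ × ℝ × ℝ | p.2.1 < p.1 ∧ p.2.1 < p.2.2})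
      {p : ℝ × ℝ × ℝ | p.2.2 < p.1 ∧ p.2.2 < p.2.1} := by
    rw [Set.disjoint_left]
    rintro p (⟨h1, h1'⟩ | ⟨h2, h2'⟩) ⟨h3, h3'⟩
    · exact absurd (h1'.trans h3) (lt_irrefl _)
    · exact absurd (h2'.trans h3') (lt_irrefl _)
  have hcompl : ν.prod (ν.prod ν) ({p : ℝ × ℝ × ℝ | p.1 < p.2.1 ∧ p.1 < p.2.2}
      ∪ {p : ℝ × ℝ × ℝ | p.2.1 < p.1 ∧ p.2.1 < p.2.2}
      ∪ {p : ℝ × ℝ × ℝ | p.2.2 < p.1 ∧ p.2.2 < p.2.1})ᶜ = 0 := by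
    have hsub : ({p : ℝ × ℝ × ℝ | p.1 < p.2.1 ∧ p.1 < p.2.2}
        ∪ {p : ℝ × ℝ × ℝ | p.2.1 < p.1 ∧ p.2.1 < p.2.2}
        ∪ {p : ℝ × ℝ × ℝ | p.2.2 < p.1 ∧ p.2.2 < p.2.1})ᶜ ⊆
        {p : ℝ × ℝ × ℝ | p.2.1 = p.1} ∪ {p : ℝ × ℝ × ℝ | p.2.2 = p.1}
          ∪ {p : ℝ × ℝ × ℝ | p.2.1 = p.2.2} := by
      intro p hp
      simp only [Set.mem_compl_iff, Set.mem_union, Set.mem_setOf_eq, not_or] at hp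
      obtain ⟨⟨n1, n2⟩, n3⟩ := hp
      simp only [Set.mem_union, Set.mem_setOf_eq]
      by_contra hne
      push_neg at hne
      obtain ⟨⟨g1, g2⟩, g3⟩ := hne
      rcases lt_trichotomy p.1 p.2.1 with hab | hab | hab
      · rcases lt_trichotomy p.1 p.2.2 with hac | hac | hac
        · exact n1 ⟨hab, hac⟩
        · exact g2 hac.symm
        · exact n3 ⟨hac, hac.trans hab⟩
      · exact g1 hab.symm
      · rcases lt_trichotomy p.2.1 p.2.2 with hbc | hbc | hbc
        · exact n2 ⟨hab, hbc⟩
        · exact g3 hbc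
        · exact n3 ⟨hbc.trans hab, hbc⟩
    refine measure_mono_null hsub ?_
    have e1 : ν.prod (ν.prod ν) {p : ℝ × ℝ × ℝ | p.2.1 = p.1} = 0 :=
      slice1_null ν hatom (fun x => x) measurable_id
    have e2 : ν.prod (ν.prod ν) {p : ℝ × ℝ × ℝ | p.2.2 = p.1} = 0 :=
      slice2_null ν hatom (fun x => x) measurable_id
    have e3 : ν.prod (ν.prod ν) {p : ℝ × ℝ × ℝ | p.2.1 = p.2.2} = 0 :=
      slice3_null ν hatom
    refine le_antisymm (le_trans (measure_union_le _ _) ?_) zero_le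
    rw [e3, add_zero]
    refine le_trans (measure_union_le _ _) ?_
    rw [e1, e2, add_zero]
  have hu : ν.prod (ν.prod ν) ({p : ℝ × ℝ × ℝ | p.1 < p.2.1 ∧ p.1 < p.2.2}
      ∪ {p : ℝ × ℝ × ℝ | p.2.1 < p.1 ∧ p.2.1 < p.2.2}
      ∪ {p : ℝ × ℝ × ℝ | p.2.2 < p.1 ∧ p.2.2 < p.2.1})
      = ν.prod (ν.prod ν) {p : ℝ × ℝ × ℝ | p.1 < p.2.1 ∧ p.1 < p.2.2}
        + ν.prod (ν.prod ν) {p : ℝ × ℝ × ℝ | p.1 < p.2.1 ∧ p.1 < p.2.2}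
        + ν.prod (ν.prod ν) {p : ℝ × ℝ × ℝ | p.1 < p.2.1 ∧ p.1 < p.2.2} := by
    rw [measure_union hd3 hA3m, measure_union hd12 hA2m, h21, h32.trans h21]
  have h1 : ν.prod (ν.prod ν) ({p : ℝ × ℝ × ℝ | p.1 < p.2.1 ∧ p.1 < p.2.2}
      ∪ {p : ℝ × ℝ × ℝ | p.2.1 < p.1 ∧ p.2.1 < p.2.2}
      ∪ {p : ℝ × ℝ × ℝ | p.2.2 < p.1 ∧ p.2.2 < p.2.1}) = 1 := by
    have := measure_add_measure_compl (μ := ν.prod (ν.prod ν))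
      ((hA1m.union hA2m).union hA3m)
    rw [hcompl, add_zero, measure_univ] at this
    exact this
  have hsum := hu.symm.trans h1
  have h3 : (3 : ℝ≥0∞) * ν.prod (ν.prod ν) {p : ℝ × ℝ × ℝ | p.1 < p.2.1 ∧ p.1 < p.2.2} = 1 := by
    rw [← hsum]; ring
  exact (ENNReal.eq_div_iff (by norm_num) (by norm_num)).2 h3

private lemma pi_zero1 (hatom : ∀ x : ℝ, ν {x} = 0) :
    ν.prod (ν.prod ν) {p : ℝ × ℝ × ℝ | p.1 + p.2.1 = 0} = 0 := by
  have he : {p : ℝ × ℝ × ℝ | p.1 + p.2.1 = 0} = {p : ℝ × ℝ × ℝ | p.2.1 = -p.1} := by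
    ext p
    simp only [Set.mem_setOf_eq]
    constructor <;> intro h <;> linarith
  rw [he]
  exact slice1_null ν hatom (fun x => -x) measurable_neg

private lemma pi_zero2 (hatom : ∀ x : ℝ, ν {x} = 0) :
    ν.prod (ν.prod ν) {p : ℝ × ℝ × ℝ | p.1 + p.2.2 = 0} = 0 := by
  have he : {p : ℝ × ℝ × ℝ | p.1 + p.2.2 = 0} = {p : ℝ × ℝ × ℝ | p.2.2 = -p.1} := by
    ext p
    simp only [Set.mem_setOf_eq]
    constructor <;> intro h <;> linarith
  rw [he]
  exact slice2_null ν hatom (fun x => -x) measurable_neg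

private lemma map_neg3 (hneg : ν.map Neg.neg = ν) :
    (ν.prod (ν.prod ν)).map (Prod.map Neg.neg (Prod.map Neg.neg Neg.neg))
      = ν.prod (ν.prod ν) := by
  rw [← Measure.map_prod_map _ _ measurable_neg (measurable_neg.prodMap measurable_neg),
    hneg, ← Measure.map_prod_map _ _ measurable_neg measurable_neg, hneg]

private lemma map_neg1 (hneg : ν.map Neg.neg = ν) :
    (ν.prod (ν.prod ν)).map (Prod.map Neg.neg id) = ν.prod (ν.prod ν) := by
  rw [← Measure.map_prod_map _ _ measurable_neg measurable_id, hneg, Measure.map_id]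

private lemma pi_half1 (hatom : ∀ x : ℝ, ν {x} = 0) (hneg : ν.map Neg.neg = ν) :
    ν.prod (ν.prod ν) {p : ℝ × ℝ × ℝ | 0 < p.1 + p.2.1} = 1 / 2 := by
  have madd : Measurable fun p : ℝ × ℝ × ℝ => p.1 + p.2.1 :=
    measurable_fst.add measurable_snd.fst
  have mS : MeasurableSet {p : ℝ × ℝ × ℝ | 0 < p.1 + p.2.1} :=
    measurableSet_lt measurable_const madd
  have hswap : ν.prod (ν.prod ν) {p : ℝ × ℝ × ℝ | 0 < p.1 + p.2.1}
      = ν.prod (ν.prod ν) {p : ℝ × ℝ × ℝ | p.1 + p.2.1 < 0} := by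
    conv_lhs => rw [← map_neg3 ν hneg]
    rw [Measure.map_apply (measurable_neg.prodMap (measurable_neg.prodMap measurable_neg)) mS]
    congr 1
    ext p
    simp only [Set.mem_preimage, Set.mem_setOf_eq, Prod.map_fst, Prod.map_snd]
    constructor <;> intro h <;> linarith [h]
  have hc1 : ν.prod (ν.prod ν) ({p : ℝ × ℝ × ℝ | 0 < p.1 + p.2.1})ᶜ
      = ν.prod (ν.prod ν) {p : ℝ × ℝ × ℝ | p.1 + p.2.1 < 0} := by
    refine le_antisymm ?_ (measure_mono fun p hp => ?_)
    · have hsub : ({p : ℝ × ℝ × ℝ | 0 < p.1 + p.2.1})ᶜ ⊆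
          {p : ℝ × ℝ × ℝ | p.1 + p.2.1 < 0} ∪ {p : ℝ × ℝ × ℝ | p.1 + p.2.1 = 0} := by
        intro p hp
        simp only [Set.mem_compl_iff, Set.mem_setOf_eq, not_lt] at hp
        rcases lt_or_eq_of_le hp with h | h
        · exact Or.inl h
        · exact Or.inr h
      refine le_trans (measure_mono hsub) ?_
      refine le_trans (measure_union_le _ _) ?_
      rw [pi_zero1 ν hatom, add_zero]
    · simp only [Set.mem_setOf_eq] at hp
      simp only [Set.mem_compl_iff, Set.mem_setOf_eq, not_lt]
      linarith
  have := measure_add_measure_compl (μ := ν.prod (ν.prod ν)) mS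
  rw [measure_univ, hc1, ← hswap] at this
  have h2 : (2 : ℝ≥0∞) * ν.prod (ν.prod ν) {p : ℝ × ℝ × ℝ | 0 < p.1 + p.2.1} = 1 := by
    rw [← this]; ring
  exact (ENNReal.eq_div_iff (by norm_num) (by norm_num)).2 h2

private lemma pi_half2 (hatom : ∀ x : ℝ, ν {x} = 0) (hneg : ν.map Neg.neg = ν) :
    ν.prod (ν.prod ν) {p : ℝ × ℝ × ℝ | 0 < p.1 + p.2.2} = 1 / 2 := by
  have madd : Measurable fun p : ℝ × ℝ × ℝ => p.1 + p.2.2 :=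
    measurable_fst.add measurable_snd.snd
  have mS : MeasurableSet {p : ℝ × ℝ × ℝ | 0 < p.1 + p.2.2} :=
    measurableSet_lt measurable_const madd
  have hswap : ν.prod (ν.prod ν) {p : ℝ × ℝ × ℝ | 0 < p.1 + p.2.2}
      = ν.prod (ν.prod ν) {p : ℝ × ℝ × ℝ | p.1 + p.2.2 < 0} := by
    conv_lhs => rw [← map_neg3 ν hneg]
    rw [Measure.map_apply (measurable_neg.prodMap (measurable_neg.prodMap measurable_neg)) mS]
    congr 1
    ext p
    simp only [Set.mem_preimage, Set.mem_setOf_eq, Prod.map_fst, Prod.map_snd]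
    constructor <;> intro h <;> linarith [h]
  have hc1 : ν.prod (ν.prod ν) ({p : ℝ × ℝ × ℝ | 0 < p.1 + p.2.2})ᶜ
      = ν.prod (ν.prod ν) {p : ℝ × ℝ × ℝ | p.1 + p.2.2 < 0} := by
    refine le_antisymm ?_ (measure_mono fun p hp => ?_)
    · have hsub : ({p : ℝ × ℝ × ℝ | 0 < p.1 + p.2.2})ᶜ ⊆
          {p : ℝ × ℝ × ℝ | p.1 + p.2.2 < 0} ∪ {p : ℝ × ℝ × ℝ | p.1 + p.2.2 = 0} := by
        intro p hp
        simp only [Set.mem_compl_iff, Set.mem_setOf_eq, not_lt] at hp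
        rcases lt_or_eq_of_le hp with h | h
        · exact Or.inl h
        · exact Or.inr h
      refine le_trans (measure_mono hsub) ?_
      refine le_trans (measure_union_le _ _) ?_
      rw [pi_zero2 ν hatom, add_zero]
    · simp only [Set.mem_setOf_eq] at hp
      simp only [Set.mem_compl_iff, Set.mem_setOf_eq, not_lt]
      linarith
  have := measure_add_measure_compl (μ := ν.prod (ν.prod ν)) mS
  rw [measure_univ, hc1, ← hswap] at this
  have h2 : (2 : ℝ≥0∞) * ν.prod (ν.prod ν) {p : ℝ × ℝ × ℝ | 0 < p.1 + p.2.2} = 1 := by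
    rw [← this]; ring
  exact (ENNReal.eq_div_iff (by norm_num) (by norm_num)).2 h2

private lemma pi_third (hatom : ∀ x : ℝ, ν {x} = 0) (hneg : ν.map Neg.neg = ν) :
    ν.prod (ν.prod ν) {p : ℝ × ℝ × ℝ | 0 < p.1 + p.2.1 ∧ 0 < p.1 + p.2.2} = 1 / 3 := by
  have mS : MeasurableSet {p : ℝ × ℝ × ℝ | 0 < p.1 + p.2.1 ∧ 0 < p.1 + p.2.2} :=
    (measurableSet_lt measurable_const (measurable_fst.add measurable_snd.fst)).inter
      (measurableSet_lt measurable_const (measurable_fst.add measurable_snd.snd))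
  have key : ν.prod (ν.prod ν) {p : ℝ × ℝ × ℝ | 0 < p.1 + p.2.1 ∧ 0 < p.1 + p.2.2}
      = ν.prod (ν.prod ν) {p : ℝ × ℝ × ℝ | p.1 < p.2.1 ∧ p.1 < p.2.2} := by
    conv_lhs => rw [← map_neg1 ν hneg]
    rw [Measure.map_apply (measurable_neg.prodMap measurable_id) mS]
    congr 1
    ext p
    simp only [Set.mem_preimage, Set.mem_setOf_eq, Prod.map_fst, Prod.map_snd, id_eq]
    constructor <;> intro h <;> exact ⟨by linarith [h.1], by linarith [h.2]⟩
  rw [key]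
  exact pi_min ν hatom

end aux

/-- For i.i.d. symmetric `S, S₁, S₂` with continuous common CDF,
`E[sgn(S + S₁) · sgn(S + S₂)] = 1/3`. -/
theorem expectation_sign_product
    {Ω : Type*} [MeasurableSpace Ω] (μ : Measure Ω) [IsProbabilityMeasure μ]
    (f : Fin 3 → Ω → ℝ) (hmeas : ∀ i, Measurable (f i))
    (hindep : iIndepFun f μ)
    (hident : ∀ i, Measure.map (f i) μ = Measure.map (f 0) μ)
    (hsymm : Measure.map (f 0) μ = Measure.map (fun ω => -f 0 ω) μ)
    (hcont : Continuous fun x => (μ {ω | f 0 ω ≤ x}).toReal) :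
    ∫ ω, Real.sign (f 0 ω + f 1 ω) * Real.sign (f 0 ω + f 2 ω) ∂μ = 1 / 3 := by
  set ν : Measure ℝ := μ.map (f 0) with hν
  haveI hprob : IsProbabilityMeasure ν := Measure.isProbabilityMeasure_map (hmeas 0).aemeasurable
  have hneg : ν.map Neg.neg = ν := by
    rw [hν, Measure.map_map measurable_neg (hmeas 0)]
    exact hsymm.symm
  have hcont' : Continuous fun x => (ν (Iic x)).toReal := by
    have he : (fun x => (ν (Iic x)).toReal) = fun x => (μ {ω | f 0 ω ≤ x}).toReal := by
      funext x
      rw [hν, Measure.map_apply (hmeas 0) measurableSet_Iic]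
      rfl
    rw [he]; exact hcont
  have hatom : ∀ x : ℝ, ν {x} = 0 := by
    intro x
    have hfin : ∀ s : Set ℝ, ν s ≠ ⊤ := fun s => measure_ne_top ν s
    have key : ∀ n : ℕ,
        (ν {x}).toReal ≤ (ν (Iic x)).toReal - (ν (Iic (x - 1/((n : ℝ)+1)))).toReal := by
      intro n
      have hy : x - 1/((n : ℝ)+1) < x := sub_lt_self x (by positivity)
      have hsub : {x} ⊆ Iic x \ Iic (x - 1/((n : ℝ)+1)) := by
        intro z hz
        rw [Set.mem_singleton_iff] at hz
        subst hz
        exact ⟨Set.mem_Iic.2 le_rfl, fun hmem => (not_le.2 hy) (Set.mem_Iic.1 hmem)⟩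
      have h1 : ν {x} ≤ ν (Iic x \ Iic (x - 1/((n : ℝ)+1))) := measure_mono hsub
      have h2 : ν (Iic x \ Iic (x - 1/((n : ℝ)+1)))
          = ν (Iic x) - ν (Iic (x - 1/((n : ℝ)+1))) :=
        measure_diff (Iic_subset_Iic.2 hy.le) measurableSet_Iic.nullMeasurableSet (hfin _)
      have h3 : (ν {x}).toReal ≤ (ν (Iic x \ Iic (x - 1/((n : ℝ)+1)))).toReal :=
        ENNReal.toReal_mono (hfin _) h1
      rw [h2, ENNReal.toReal_sub_of_le (measure_mono (Iic_subset_Iic.2 hy.le)) (hfin _)] at h3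
      exact h3
    have hseq : Filter.Tendsto (fun n : ℕ => x - 1/((n : ℝ)+1)) atTop (nhds x) := by
      have h0 := tendsto_one_div_add_atTop_nhds_zero_nat (𝕜 := ℝ)
      have := Filter.Tendsto.sub (tendsto_const_nhds (α := ℕ) (x := x)) h0
      simpa using this
    have hlim : Filter.Tendsto
        (fun n : ℕ => (ν (Iic x)).toReal - (ν (Iic (x - 1/((n : ℝ)+1)))).toReal)
        atTop (nhds 0) := by
      have h2 := (hcont'.tendsto x).comp hseq
      have := Filter.Tendsto.sub
        (tendsto_const_nhds (α := ℕ) (x := (ν (Iic x)).toReal)) h2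
      simpa using this
    have hle : (ν {x}).toReal ≤ 0 := ge_of_tendsto' hlim key
    have h0 : (ν {x}).toReal = 0 := le_antisymm hle ENNReal.toReal_nonneg
    exact ((ENNReal.toReal_eq_zero_iff _).1 h0).resolve_right (hfin _)
  -- joint law is the threefold product
  have h12 : IndepFun (f 1) (f 2) μ := hindep.indepFun (by decide)
  have hp12 : μ.map (fun ω => (f 1 ω, f 2 ω)) = ν.prod ν := by
    rw [(indepFun_iff_map_prod_eq_prod_map_map (hmeas 1).aemeasurable
      (hmeas 2).aemeasurable).1 h12, hident 1, hident 2]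
  have h0i : IndepFun (f 0) (fun ω => (f 1 ω, f 2 ω)) μ :=
    (hindep.indepFun_prodMk hmeas 1 2 0 (by decide) (by decide)).symm
  have hmap3 : μ.map (fun ω => (f 0 ω, (f 1 ω, f 2 ω))) = ν.prod (ν.prod ν) := by
    rw [(indepFun_iff_map_prod_eq_prod_map_map (hmeas 0).aemeasurable
      ((hmeas 1).prodMk (hmeas 2)).aemeasurable).1 h0i, hp12]
  have hT : Measurable fun ω => (f 0 ω, (f 1 ω, f 2 ω)) :=
    (hmeas 0).prodMk ((hmeas 1).prodMk (hmeas 2))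
  have hev : ∀ {E : Set (ℝ × ℝ × ℝ)}, MeasurableSet E →
      μ ((fun ω => (f 0 ω, (f 1 ω, f 2 ω))) ⁻¹' E) = ν.prod (ν.prod ν) E := by
    intro E hE
    rw [← hmap3, Measure.map_apply hT hE]
  have mS1 : MeasurableSet {p : ℝ × ℝ × ℝ | 0 < p.1 + p.2.1} :=
    measurableSet_lt measurable_const (measurable_fst.add measurable_snd.fst)
  have mS2 : MeasurableSet {p : ℝ × ℝ × ℝ | 0 < p.1 + p.2.2} :=
    measurableSet_lt measurable_const (measurable_fst.add measurable_snd.snd)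
  have mS12 : MeasurableSet {p : ℝ × ℝ × ℝ | 0 < p.1 + p.2.1 ∧ 0 < p.1 + p.2.2} :=
    mS1.inter mS2
  have mZ1 : MeasurableSet {p : ℝ × ℝ × ℝ | p.1 + p.2.1 = 0} :=
    meas_eq_fun (measurable_fst.add measurable_snd.fst) measurable_const
  have mZ2 : MeasurableSet {p : ℝ × ℝ × ℝ | p.1 + p.2.2 = 0} :=
    meas_eq_fun (measurable_fst.add measurable_snd.snd) measurable_const
  -- null events
  have hZ1 : μ {ω | f 0 ω + f 1 ω = 0} = 0 := by
    have he : {ω | f 0 ω + f 1 ω = 0}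
        = (fun ω => (f 0 ω, (f 1 ω, f 2 ω))) ⁻¹' {p : ℝ × ℝ × ℝ | p.1 + p.2.1 = 0} := rfl
    rw [he, hev mZ1, pi_zero1 ν hatom]
  have hZ2 : μ {ω | f 0 ω + f 2 ω = 0} = 0 := by
    have he : {ω | f 0 ω + f 2 ω = 0}
        = (fun ω => (f 0 ω, (f 1 ω, f 2 ω))) ⁻¹' {p : ℝ × ℝ × ℝ | p.1 + p.2.2 = 0} := rfl
    rw [he, hev mZ2, pi_zero2 ν hatom]
  -- probabilities
  have hA : μ {ω | 0 < f 0 ω + f 1 ω} = 1 / 2 := by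
    have he : {ω | 0 < f 0 ω + f 1 ω}
        = (fun ω => (f 0 ω, (f 1 ω, f 2 ω))) ⁻¹' {p : ℝ × ℝ × ℝ | 0 < p.1 + p.2.1} := rfl
    rw [he, hev mS1, pi_half1 ν hatom hneg]
  have hB : μ {ω | 0 < f 0 ω + f 2 ω} = 1 / 2 := by
    have he : {ω | 0 < f 0 ω + f 2 ω}
        = (fun ω => (f 0 ω, (f 1 ω, f 2 ω))) ⁻¹' {p : ℝ × ℝ × ℝ | 0 < p.1 + p.2.2} := rfl
    rw [he, hev mS2, pi_half2 ν hatom hneg]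
  have hAB : μ ({ω | 0 < f 0 ω + f 1 ω} ∩ {ω | 0 < f 0 ω + f 2 ω}) = 1 / 3 := by
    have he : {ω | 0 < f 0 ω + f 1 ω} ∩ {ω | 0 < f 0 ω + f 2 ω}
        = (fun ω => (f 0 ω, (f 1 ω, f 2 ω))) ⁻¹'
          {p : ℝ × ℝ × ℝ | 0 < p.1 + p.2.1 ∧ 0 < p.1 + p.2.2} := rfl
    rw [he, hev mS12, pi_third ν hatom hneg]
  -- measurability of the events in Ω
  have mA : MeasurableSet {ω | 0 < f 0 ω + f 1 ω} :=
    measurableSet_lt measurable_const ((hmeas 0).add (hmeas 1))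
  have mB : MeasurableSet {ω | 0 < f 0 ω + f 2 ω} :=
    measurableSet_lt measurable_const ((hmeas 0).add (hmeas 2))
  -- a.e. identity of the integrand with a simple function
  have e1 : ∀ᵐ ω ∂μ, f 0 ω + f 1 ω ≠ 0 := by
    rw [ae_iff]
    have he : {ω | ¬ f 0 ω + f 1 ω ≠ 0} = {ω | f 0 ω + f 1 ω = 0} := by
      ext ω; simp
    rw [he]; exact hZ1
  have e2 : ∀ᵐ ω ∂μ, f 0 ω + f 2 ω ≠ 0 := by
    rw [ae_iff]
    have he : {ω | ¬ f 0 ω + f 2 ω ≠ 0} = {ω | f 0 ω + f 2 ω = 0} := by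
      ext ω; simp
    rw [he]; exact hZ2
  have hae : (fun ω => Real.sign (f 0 ω + f 1 ω) * Real.sign (f 0 ω + f 2 ω)) =ᵐ[μ]
      (fun ω =>
        4 * ({ω | 0 < f 0 ω + f 1 ω} ∩ {ω | 0 < f 0 ω + f 2 ω}).indicator
            (fun _ => (1 : ℝ)) ω
        - 2 * ({ω | 0 < f 0 ω + f 1 ω}).indicator (fun _ => (1 : ℝ)) ω
        - 2 * ({ω | 0 < f 0 ω + f 2 ω}).indicator (fun _ => (1 : ℝ)) ω + 1) := by
    filter_upwards [e1, e2] with ω h1 h2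
    rcases h1.lt_or_gt with hx | hx <;> rcases h2.lt_or_gt with hy | hy <;>
      simp [Set.indicator_apply, Set.mem_inter_iff, Set.mem_setOf_eq,
        Real.sign_of_pos, Real.sign_of_neg, hx, hy, lt_asymm hx, lt_asymm hy] <;>
      norm_num
  rw [integral_congr_ae hae]
  have i1 : Integrable
      (({ω | 0 < f 0 ω + f 1 ω} ∩ {ω | 0 < f 0 ω + f 2 ω}).indicator
        (fun _ => (1 : ℝ))) μ := (integrable_const 1).indicator (mA.inter mB)
  have i2 : Integrable (({ω | 0 < f 0 ω + f 1 ω}).indicator (fun _ => (1 : ℝ))) μ :=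
    (integrable_const 1).indicator mA
  have i3 : Integrable (({ω | 0 < f 0 ω + f 2 ω}).indicator (fun _ => (1 : ℝ))) μ :=
    (integrable_const 1).indicator mB
  have ia : Integrable (fun ω =>
      4 * ({ω | 0 < f 0 ω + f 1 ω} ∩ {ω | 0 < f 0 ω + f 2 ω}).indicator (fun _ => (1 : ℝ)) ω
      - 2 * ({ω | 0 < f 0 ω + f 1 ω}).indicator (fun _ => (1 : ℝ)) ω) μ :=
    (i1.const_mul 4).sub (i2.const_mul 2)
  have ib : Integrable (fun ω =>
      4 * ({ω | 0 < f 0 ω + f 1 ω} ∩ {ω | 0 < f 0 ω + f 2 ω}).indicator (fun _ => (1 : ℝ)) ω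
      - 2 * ({ω | 0 < f 0 ω + f 1 ω}).indicator (fun _ => (1 : ℝ)) ω
      - 2 * ({ω | 0 < f 0 ω + f 2 ω}).indicator (fun _ => (1 : ℝ)) ω) μ :=
    ia.sub (i3.const_mul 2)
  rw [integral_add ib (integrable_const 1),
    integral_sub ia (i3.const_mul 2),
    integral_sub (i1.const_mul 4) (i2.const_mul 2),
    integral_const_mul, integral_const_mul, integral_const_mul,
    integral_indicator_const (1 : ℝ) (mA.inter mB),
    integral_indicator_const (1 : ℝ) mA, integral_indicator_const (1 : ℝ) mB,
    integral_const, measureReal_def, measureReal_def, measureReal_def, measureReal_def,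
    hAB, hA, hB, measure_univ]
  norm_num [ENNReal.toReal_div]
end

section
/- Let S and S₁ be i.i.d. real random variables with a common continuous distribution symmetric about 0, and set X₁ = S + S₁. Then P(X₁ > 0 and S > 0) = 3/8. -/
open MeasureTheory ProbabilityTheory
open scoped ENNReal

/-- For i.i.d. symmetric `S, S₁` with continuous common CDF,
`P(S + S₁ > 0 and S > 0) = 3/8`. -/
theorem prob_sum_pos_and_pos
    {Ω : Type*} [MeasurableSpace Ω] (μ : Measure Ω) [IsProbabilityMeasure μ]
    (f : Fin 2 → Ω → ℝ) (hmeas : ∀ i, Measurable (f i))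
    (hindep : iIndepFun f μ)
    (hident : Measure.map (f 1) μ = Measure.map (f 0) μ)
    (hsymm : Measure.map (f 0) μ = Measure.map (fun ω => -f 0 ω) μ)
    (hcont : Continuous fun x => (μ {ω | f 0 ω ≤ x}).toReal) :
    μ {ω | 0 < f 0 ω + f 1 ω ∧ 0 < f 0 ω} = 3 / 8 := by
  set ν : Measure ℝ := Measure.map (f 0) μ with hν
  have hprob : IsProbabilityMeasure ν := Measure.isProbabilityMeasure_map (hmeas 0).aemeasurable
  have hfin : ∀ s : Set ℝ, ν s ≠ ⊤ := fun s => (measure_lt_top ν s).ne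
  -- CDF of ν is continuous
  have hF : Continuous fun x => (ν (Set.Iic x)).toReal := by
    convert hcont using 2 with x
    rw [hν, Measure.map_apply (hmeas 0) measurableSet_Iic]
    rfl
  -- ν has no atoms
  have hatom : ∀ x : ℝ, ν {x} = 0 := by
    intro x
    by_contra h
    have hc : 0 < (ν {x}).toReal := ENNReal.toReal_pos h (hfin _)
    set F : ℝ → ℝ := fun y => (ν (Set.Iic y)).toReal with hFdef
    have key : ∀ y < x, (ν {x}).toReal ≤ F x - F y := by
      intro y hy
      have h1 : ν {x} + ν (Set.Iic y) ≤ ν (Set.Iic x) := by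
        have hd : Disjoint ({x} : Set ℝ) (Set.Iic y) :=
          Set.disjoint_singleton_left.mpr (not_le.mpr hy)
        calc ν {x} + ν (Set.Iic y) = ν ({x} ∪ Set.Iic y) :=
              (measure_union hd measurableSet_Iic).symm
          _ ≤ ν (Set.Iic x) := by
              refine measure_mono ?_
              rintro z (hz | hz)
              · simp only [Set.mem_singleton_iff] at hz
                simp [hz]
              · exact le_trans hz hy.le
      have h2 := ENNReal.toReal_mono (hfin _) h1
      rw [ENNReal.toReal_add (hfin _) (hfin _)] at h2
      simp only [hFdef]
      linarith
    have htd : Filter.Tendsto F (nhdsWithin x (Set.Iio x)) (nhds (F x)) :=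
      (hF.tendsto x).mono_left nhdsWithin_le_nhds
    have h2 : ∀ᶠ y in nhdsWithin x (Set.Iio x), F x - (ν {x}).toReal < F y :=
      htd.eventually (eventually_gt_nhds (by linarith))
    obtain ⟨y, hy1, hy2⟩ := (h2.and self_mem_nhdsWithin).exists
    have := key y hy2
    linarith
  -- ν is symmetric
  have hnegmap : ν.map (fun x : ℝ => -x) = ν := by
    rw [hν, Measure.map_map measurable_neg (hmeas 0)]
    exact (hsymm.trans (by rfl)).symm
  have hIoi : ν (Set.Ioi 0) = 1 / 2 := by
    have hio : ν (Set.Iio 0) = ν (Set.Ioi 0) := by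
      have hpre : Set.Iio (0:ℝ) = (fun x : ℝ => -x) ⁻¹' Set.Ioi 0 := by
        ext z; simp
      rw [hpre, ← Measure.map_apply measurable_neg measurableSet_Ioi, hnegmap]
    have htot : 2 * ν (Set.Ioi 0) = 1 := by
      have hd1 : Disjoint ({(0:ℝ)} : Set ℝ) (Set.Ioi 0) := by simp
      have hd2 : Disjoint (Set.Iio (0:ℝ)) ({(0:ℝ)} ∪ Set.Ioi 0) := by
        rw [Set.disjoint_left]
        rintro z hz (h | h) <;> simp_all [Set.mem_Iio] <;> linarith
      have : ν (Set.Iio 0 ∪ ({0} ∪ Set.Ioi 0)) = 1 := by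
        convert measure_univ
        · ext z; rcases lt_trichotomy z 0 with h | h | h <;> simp [h]
        · infer_instance
      rw [measure_union hd2 ((measurableSet_singleton 0).union measurableSet_Ioi),
        measure_union hd1 measurableSet_Ioi, hatom 0, zero_add, hio, ← two_mul] at this
      exact this
    rw [(ENNReal.eq_div_iff (by norm_num) (by norm_num)).mpr htot]
  -- the joint law is ν × ν
  set π : Measure (ℝ × ℝ) := ν.prod ν with hπ
  have hmap : μ.map (fun ω => (f 0 ω, f 1 ω)) = π := by
    have h01 : IndepFun (f 0) (f 1) μ := hindep.indepFun (by decide)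
    rw [(indepFun_iff_map_prod_eq_prod_map_map (hmeas 0).aemeasurable
      (hmeas 1).aemeasurable).mp h01, hident]
  -- diagonal is null
  have hdiagset : MeasurableSet {p : ℝ × ℝ | p.1 = p.2} :=
    measurableSet_eq_fun measurable_fst measurable_snd
  have hdiag : π {p : ℝ × ℝ | p.1 = p.2} = 0 := by
    rw [hπ, Measure.prod_apply hdiagset]
    have hfib : ∀ x : ℝ, ν (Prod.mk x ⁻¹' {p : ℝ × ℝ | p.1 = p.2}) = 0 := by
      intro x
      have : Prod.mk x ⁻¹' {p : ℝ × ℝ | p.1 = p.2} = {x} := by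
        ext z; simp [eq_comm]
      rw [this]; exact hatom x
    simp [hatom]
  -- the quadrant has measure 1/4
  have hE1 : π (Set.Ioi 0 ×ˢ Set.Ioi 0) = 1 / 4 := by
    rw [hπ, Measure.prod_prod, hIoi,
      show ((1:ℝ≥0∞)/2) * (1/2) = 1/4 by
        rw [one_div, ← ENNReal.mul_inv (Or.inl (by norm_num)) (Or.inr (by norm_num))]
        norm_num]
  -- key sets
  set A : Set (ℝ × ℝ) := {p | 0 < p.2 ∧ p.2 < p.1} with hA
  set B : Set (ℝ × ℝ) := {p | 0 < p.1 ∧ p.1 < p.2} with hB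
  have hAm : MeasurableSet A :=
    (measurableSet_lt measurable_const measurable_snd).inter
      (measurableSet_lt measurable_snd measurable_fst)
  have hBm : MeasurableSet B :=
    (measurableSet_lt measurable_const measurable_fst).inter
      (measurableSet_lt measurable_fst measurable_snd)
  -- A and B have the same measure by swap symmetry
  have hswap : π A = π B := by
    have hpre : Prod.swap ⁻¹' A = B := by
      ext ⟨x, y⟩; simp [hA, hB]
    rw [← hpre, ← Measure.map_apply measurable_swap hAm, hπ, Measure.prod_swap]
  -- A has measure 1/8
  have hA8 : π A = 1 / 8 := by
    have hsplit : Set.Ioi (0:ℝ) ×ˢ Set.Ioi (0:ℝ) =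
        (A ∪ B) ∪ {p : ℝ × ℝ | 0 < p.1 ∧ p.1 = p.2} := by
      ext ⟨x, y⟩
      simp only [Set.mem_prod, Set.mem_Ioi, Set.mem_union, Set.mem_setOf_eq, hA, hB]
      constructor
      · rintro ⟨hx, hy⟩
        rcases lt_trichotomy x y with h | h | h
        · exact Or.inl (Or.inr ⟨hx, h⟩)
        · exact Or.inr ⟨hx, h⟩
        · exact Or.inl (Or.inl ⟨hy, h⟩)
      · rintro ((⟨h1, h2⟩ | ⟨h1, h2⟩) | ⟨h1, h2⟩)
        · exact ⟨lt_trans h1 h2, h1⟩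
        · exact ⟨h1, lt_trans h1 h2⟩
        · exact ⟨h1, h2 ▸ h1⟩
    have hD0 : π {p : ℝ × ℝ | 0 < p.1 ∧ p.1 = p.2} = 0 :=
      measure_mono_null (fun p hp => hp.2) hdiag
    have hAB : Disjoint A B := by
      rw [Set.disjoint_left]
      rintro ⟨x, y⟩ ⟨h1, h2⟩ ⟨h3, h4⟩
      exact absurd (lt_trans h2 h4) (lt_irrefl _)
    have hUnion : π (A ∪ B) = 1 / 4 := by
      refine le_antisymm ?_ ?_
      · rw [← hE1]
        exact measure_mono (by rw [hsplit]; exact Set.subset_union_left)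
      · rw [← hE1, hsplit]
        refine le_trans (measure_union_le _ _) ?_
        rw [hD0, add_zero]
    rw [measure_union hAB hBm, ← hswap, ← two_mul] at hUnion
    rw [(ENNReal.eq_div_iff (by norm_num) (by norm_num)).mpr hUnion,
      div_eq_mul_inv, one_div, ← ENNReal.mul_inv (Or.inl (by norm_num)) (Or.inr (by norm_num))]
    norm_num
  -- measure of the "S > 0 ≥ S₁, S + S₁ > 0" piece
  set E2 : Set (ℝ × ℝ) := {p | 0 < p.1 + p.2 ∧ 0 < p.1 ∧ p.2 ≤ 0} with hE2def
  have hE2m : MeasurableSet E2 :=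
    (measurableSet_lt measurable_const (measurable_fst.add measurable_snd)).inter
      ((measurableSet_lt measurable_const measurable_fst).inter
        (measurableSet_le measurable_snd measurable_const))
  have hE2 : π E2 = 1 / 8 := by
    have hmapneg : π = π.map (Prod.map id (fun x : ℝ => -x)) := by
      rw [hπ, ← Measure.map_prod_map _ _ measurable_id measurable_neg,
        Measure.map_id, hnegmap]
    have hpre : (Prod.map id (fun x : ℝ => -x)) ⁻¹' E2 =
        A ∪ {p : ℝ × ℝ | p.2 = 0 ∧ 0 < p.1} := by
      ext ⟨x, y⟩
      simp only [Set.mem_preimage, Prod.map, hE2def, Set.mem_setOf_eq, Set.mem_union, hA,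
        id_eq, neg_nonpos, Set.mem_setOf_eq]
      constructor
      · rintro ⟨h1, h2, h3⟩
        rcases eq_or_lt_of_le h3 with h | h
        · exact Or.inr ⟨by linarith, h2⟩
        · exact Or.inl ⟨h, by linarith⟩
      · rintro (⟨h1, h2⟩ | ⟨h1, h2⟩)
        · exact ⟨by linarith, by linarith, by linarith⟩
        · exact ⟨by simp [h1]; linarith, h2, by linarith⟩
    have hZ : π {p : ℝ × ℝ | p.2 = 0 ∧ 0 < p.1} = 0 := by
      refine measure_mono_null (fun p hp => hp.1 : _ ⊆ {p : ℝ × ℝ | p.2 = 0}) ?_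
      have huz : {p : ℝ × ℝ | p.2 = 0} = Set.univ ×ˢ ({0} : Set ℝ) := by
        ext ⟨x, y⟩; simp [eq_comm]
      rw [hπ, huz, Measure.prod_prod, hatom 0, mul_zero]
    have hAZ : π (A ∪ {p : ℝ × ℝ | p.2 = 0 ∧ 0 < p.1}) = π A :=
      le_antisymm ((measure_union_le _ _).trans (by rw [hZ, add_zero]))
        (measure_mono Set.subset_union_left)
    rw [hmapneg, Measure.map_apply (measurable_id.prodMap measurable_neg) hE2m, hpre,
      hAZ, hA8]
  -- put everything together
  set T : Set (ℝ × ℝ) := {p | 0 < p.1 + p.2 ∧ 0 < p.1} with hT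
  have hTm : MeasurableSet T :=
    (measurableSet_lt measurable_const (measurable_fst.add measurable_snd)).inter
      (measurableSet_lt measurable_const measurable_fst)
  have hTsplit : T = (Set.Ioi 0 ×ˢ Set.Ioi 0) ∪ E2 := by
    ext ⟨x, y⟩
    simp only [hT, Set.mem_setOf_eq, Set.mem_union, Set.mem_prod, Set.mem_Ioi, hE2def]
    constructor
    · rintro ⟨h1, h2⟩
      rcases le_or_gt y 0 with h | h
      · exact Or.inr ⟨h1, h2, h⟩
      · exact Or.inl ⟨h2, h⟩
    · rintro (⟨h1, h2⟩ | ⟨h1, h2, h3⟩)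
      · exact ⟨by linarith, h1⟩
      · exact ⟨h1, h2⟩
  have hdisj : Disjoint (Set.Ioi (0:ℝ) ×ˢ Set.Ioi (0:ℝ)) E2 := by
    rw [Set.disjoint_left]
    rintro ⟨x, y⟩ ⟨h1, h2⟩ ⟨h3, h4, h5⟩
    exact absurd h2 (not_lt.mpr h5)
  have hset : {ω | 0 < f 0 ω + f 1 ω ∧ 0 < f 0 ω} = (fun ω => (f 0 ω, f 1 ω)) ⁻¹' T := rfl
  rw [hset, ← Measure.map_apply ((hmeas 0).prodMk (hmeas 1)) hTm, hmap, hTsplit,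
    measure_union hdisj hE2m, hE1, hE2,
    show (1:ℝ≥0∞)/4 = 2/8 by rw [ENNReal.div_eq_div_iff] <;> norm_num,
    ENNReal.div_add_div_same]
  norm_num
end

section
/- Let S and S₁ be i.i.d. real random variables with a common continuous distribution symmetric about 0, and set X₁ = S + S₁. Then E[sgn(X₁)·sgn(S)] = 1/2. -/
open MeasureTheory ProbabilityTheory Set

lemma measurable_realSign : Measurable Real.sign := by
  have h : Real.sign = fun x : ℝ => if x < 0 then (-1 : ℝ) else if 0 < x then 1 else 0 := by
    funext x; rfl
  rw [h]
  exact Measurable.ite measurableSet_Iio measurable_const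
    (Measurable.ite measurableSet_Ioi measurable_const measurable_const)

lemma abs_realSign_le (x : ℝ) : |Real.sign x| ≤ 1 := by
  rcases lt_trichotomy x 0 with h | h | h
  · rw [Real.sign_of_neg h]; norm_num
  · rw [h, Real.sign_zero]; norm_num
  · rw [Real.sign_of_pos h]; norm_num

/-- For i.i.d. symmetric `S, S₁` with continuous common CDF,
`E[sgn(S + S₁) · sgn(S)] = 1/2`. -/
theorem expectation_sign_sum_sign
    {Ω : Type*} [MeasurableSpace Ω] (μ : Measure Ω) [IsProbabilityMeasure μ]
    (f : Fin 2 → Ω → ℝ) (hmeas : ∀ i, Measurable (f i))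
    (hindep : iIndepFun f μ)
    (hident : Measure.map (f 1) μ = Measure.map (f 0) μ)
    (hsymm : Measure.map (f 0) μ = Measure.map (fun ω => -f 0 ω) μ)
    (hcont : Continuous fun x => (μ {ω | f 0 ω ≤ x}).toReal) :
    ∫ ω, Real.sign (f 0 ω + f 1 ω) * Real.sign (f 0 ω) ∂μ = 1 / 2 := by
  have hm0 := hmeas 0
  have hm1 := hmeas 1
  set ν := Measure.map (f 0) μ with hν
  have hprob : IsProbabilityMeasure ν := Measure.isProbabilityMeasure_map hm0.aemeasurable
  -- the CDF has no jump at 0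
  have hν0 : ν {0} = 0 := by
    have hFset : ∀ x : ℝ, ν (Iic x) = μ {ω | f 0 ω ≤ x} := fun x => by
      rw [hν, Measure.map_apply hm0 measurableSet_Iic]; rfl
    have key : ∀ ε : ℝ, 0 < ε → (ν {0}).toReal ≤
        (μ {ω | f 0 ω ≤ 0}).toReal - (μ {ω | f 0 ω ≤ -ε}).toReal := by
      intro ε hε
      have hdisj : Disjoint ({(0 : ℝ)} : Set ℝ) (Iic (-ε)) := by
        rw [Set.disjoint_left]
        rintro x rfl hx
        simp only [mem_Iic] at hx
        linarith
      have h1 : ν {0} + ν (Iic (-ε)) ≤ ν (Iic 0) := by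
        rw [← measure_union hdisj measurableSet_Iic]
        apply measure_mono
        intro x hx
        simp only [mem_union, mem_singleton_iff, mem_Iic] at hx ⊢
        rcases hx with rfl | hx
        · exact le_refl 0
        · linarith
      have h2 : (ν {0}).toReal + (ν (Iic (-ε))).toReal ≤ (ν (Iic 0)).toReal := by
        rw [← ENNReal.toReal_add (measure_ne_top _ _) (measure_ne_top _ _)]
        exact ENNReal.toReal_mono (measure_ne_top _ _) h1
      rw [← hFset, ← hFset]
      linarith
    have htend : Filter.Tendsto
        (fun ε : ℝ => (μ {ω | f 0 ω ≤ 0}).toReal - (μ {ω | f 0 ω ≤ -ε}).toReal)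
        (nhdsWithin 0 (Ioi 0)) (nhds 0) := by
      have hc : Continuous
          (fun ε : ℝ => (μ {ω | f 0 ω ≤ 0}).toReal - (μ {ω | f 0 ω ≤ -ε}).toReal) :=
        continuous_const.sub (hcont.comp continuous_neg)
      have := (hc.tendsto 0).mono_left (nhdsWithin_le_nhds (s := Ioi (0:ℝ)))
      simpa using this
    have hle : (ν {0}).toReal ≤ 0 :=
      ge_of_tendsto htend (Filter.eventually_of_mem self_mem_nhdsWithin
        fun ε hε => key ε hε)
    have h0 : (ν {0}).toReal = 0 := le_antisymm hle ENNReal.toReal_nonneg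
    rcases ENNReal.toReal_eq_zero_iff _ |>.mp h0 with h | h
    · exact h
    · exact absurd h (measure_ne_top _ _)
  -- symmetry: ν (Iio 0) = ν (Ioi 0)
  have hsym : ν (Iio 0) = ν (Ioi 0) := by
    have h1 : ν (Iio 0) = μ {ω | -f 0 ω < 0} := by
      rw [hsymm, Measure.map_apply (show Measurable (fun ω => -f 0 ω) from hm0.neg) measurableSet_Iio]; rfl
    have h2 : ν (Ioi 0) = μ {ω | 0 < f 0 ω} := by
      rw [hν, Measure.map_apply hm0 measurableSet_Ioi]; rfl
    rw [h1, h2]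
    congr 1
    ext ω; simp
  -- ν (Ioi 0) = 1/2
  have huniv : (Iio (0 : ℝ)) ∪ ({0} ∪ Ioi 0) = univ := by
    ext x
    simp only [mem_union, mem_Iio, mem_singleton_iff, mem_Ioi, mem_univ, iff_true]
    rcases lt_trichotomy x 0 with h | h | h
    · exact Or.inl h
    · exact Or.inr (Or.inl h)
    · exact Or.inr (Or.inr h)
  have hsum : ν (Iio 0) + (ν {0} + ν (Ioi 0)) = 1 := by
    rw [← measure_union (by
        rw [Set.disjoint_left]; rintro x rfl; simp) measurableSet_Ioi,
      ← measure_union (by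
        rw [Set.disjoint_left]
        intro x hx hx'
        rcases hx' with rfl | hx'
        · exact absurd hx (by simp)
        · exact absurd (lt_trans hx hx') (lt_irrefl x)) (by
          exact MeasurableSet.union (measurableSet_singleton 0) measurableSet_Ioi),
      huniv, measure_univ]
  rw [hν0, zero_add, hsym] at hsum
  have hIoi : ν (Ioi 0) = 1 / 2 := by
    have htop : ν (Ioi 0) ≠ ⊤ := measure_ne_top _ _
    have h2 : 2 * ν (Ioi 0) = 1 := by rw [two_mul]; exact hsum
    rw [ENNReal.eq_div_iff (by norm_num) (by norm_num), mul_comm] at *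
    rw [← h2, mul_comm]
  have hIio : ν (Iio 0) = 1 / 2 := hsym.trans hIoi
  -- joint distribution is the product measure
  have hij : IndepFun (f 0) (f 1) μ := hindep.indepFun (by decide)
  have hjoint : μ.map (fun ω => (f 0 ω, f 1 ω)) = ν.prod ν := by
    have h := (indepFun_iff_map_prod_eq_prod_map_map hm0.aemeasurable hm1.aemeasurable).mp hij
    rw [h, hident]
  -- set up the integral on ℝ²
  set P := ν.prod ν with hP
  set g : ℝ × ℝ → ℝ := fun p => Real.sign (p.1 + p.2) * Real.sign p.1 with hg_def
  have hgm : Measurable g :=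
    (measurable_realSign.comp (measurable_fst.add measurable_snd)).mul
      (measurable_realSign.comp measurable_fst)
  have hgm' : Measurable fun p : ℝ × ℝ => g p.swap := hgm.comp measurable_swap
  have hI : ∫ ω, Real.sign (f 0 ω + f 1 ω) * Real.sign (f 0 ω) ∂μ = ∫ p, g p ∂P := by
    rw [← hjoint, integral_map (hm0.prodMk hm1).aemeasurable hgm.aestronglyMeasurable]
  have hswap : ∫ p, g p ∂P = ∫ p, g p.swap ∂P := by
    conv_lhs => rw [show P = Measure.map Prod.swap P from (Measure.prod_swap).symm]
    rw [integral_map measurable_swap.aemeasurable hgm.aestronglyMeasurable]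
  -- integrability
  have hbound : ∀ p : ℝ × ℝ, ‖g p‖ ≤ 1 := by
    intro p
    rw [hg_def]
    simp only [Real.norm_eq_abs, abs_mul]
    calc |Real.sign (p.1 + p.2)| * |Real.sign p.1| ≤ 1 * 1 :=
          mul_le_mul (abs_realSign_le _) (abs_realSign_le _) (abs_nonneg _) zero_le_one
      _ = 1 := mul_one 1
  have hint : Integrable g P :=
    Integrable.mono' (integrable_const 1) hgm.aestronglyMeasurable
      (Filter.Eventually.of_forall hbound)
  have hint' : Integrable (fun p : ℝ × ℝ => g p.swap) P :=
    Integrable.mono' (integrable_const 1) hgm'.aestronglyMeasurable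
      (Filter.Eventually.of_forall fun p => hbound _)
  -- the null set where a coordinate vanishes
  have hnull : P {p : ℝ × ℝ | p.1 = 0 ∨ p.2 = 0} = 0 := by
    have hsub : {p : ℝ × ℝ | p.1 = 0 ∨ p.2 = 0}
        ⊆ (({0} : Set ℝ) ×ˢ univ) ∪ (univ ×ˢ ({0} : Set ℝ)) := by
      rintro ⟨x, y⟩ (h | h)
      · exact Or.inl ⟨by simpa using h, mem_univ y⟩
      · exact Or.inr ⟨mem_univ x, by simpa using h⟩
    refine measure_mono_null hsub (le_antisymm ?_ (by simp))
    calc P ((({0} : Set ℝ) ×ˢ univ) ∪ (univ ×ˢ ({0} : Set ℝ)))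
        ≤ P (({0} : Set ℝ) ×ˢ univ) + P (univ ×ˢ ({0} : Set ℝ)) := measure_union_le _ _
      _ = 0 := by rw [hP, Measure.prod_prod, Measure.prod_prod, hν0]; simp
  set A : Set (ℝ × ℝ) := (Ioi (0 : ℝ) ×ˢ Ioi (0 : ℝ)) ∪ (Iio (0 : ℝ) ×ˢ Iio (0 : ℝ)) with hA
  have hAm : MeasurableSet A :=
    (measurableSet_Ioi.prod measurableSet_Ioi).union (measurableSet_Iio.prod measurableSet_Iio)
  -- a.e. identity
  have hae : ∀ᵐ p ∂P, g p + g p.swap = A.indicator (fun _ => (2 : ℝ)) p := by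
    have h0 : ∀ᵐ p ∂P, ¬(p.1 = 0 ∨ p.2 = 0) := by
      rw [ae_iff]
      simp only [not_not]
      exact hnull
    filter_upwards [h0] with p hp
    push_neg at hp
    obtain ⟨hx, hy⟩ := hp
    rw [hg_def]
    simp only [Prod.fst_swap, Prod.snd_swap]
    rcases hx.lt_or_gt with h1 | h1 <;> rcases hy.lt_or_gt with h2 | h2
    · have hs : p.2 + p.1 < 0 := by linarith
      have hs' : p.1 + p.2 < 0 := by linarith
      rw [Real.sign_of_neg h1, Real.sign_of_neg h2, Real.sign_of_neg hs, Real.sign_of_neg hs']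
      rw [indicator_of_mem (by rw [hA]; right; exact ⟨h1, h2⟩)]
      ring
    · rw [Real.sign_of_neg h1, Real.sign_of_pos h2]
      rw [indicator_of_notMem (by
        rw [hA]
        rintro (⟨ha, hb⟩ | ⟨ha, hb⟩)
        · exact absurd ha (by simp [not_lt.mpr h1.le])
        · exact absurd hb (by simp [not_lt.mpr h2.le]))]
      have : p.2 + p.1 = p.1 + p.2 := by ring
      rw [this]
      ring
    · rw [Real.sign_of_pos h1, Real.sign_of_neg h2]
      rw [indicator_of_notMem (by
        rw [hA]
        rintro (⟨ha, hb⟩ | ⟨ha, hb⟩)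
        · exact absurd hb (by simp [not_lt.mpr h2.le])
        · exact absurd ha (by simp [not_lt.mpr h1.le]))]
      have : p.2 + p.1 = p.1 + p.2 := by ring
      rw [this]
      ring
    · have hs : p.2 + p.1 > 0 := by linarith
      have hs' : p.1 + p.2 > 0 := by linarith
      rw [Real.sign_of_pos h1, Real.sign_of_pos h2, Real.sign_of_pos hs, Real.sign_of_pos hs']
      rw [indicator_of_mem (by rw [hA]; left; exact ⟨h1, h2⟩)]
      ring
  -- compute P A
  have hPA : P A = 1 / 2 := by
    have hdisj : Disjoint (Ioi (0 : ℝ) ×ˢ Ioi (0 : ℝ)) (Iio (0 : ℝ) ×ˢ Iio (0 : ℝ)) := by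
      rw [Set.disjoint_left]
      rintro ⟨x, y⟩ h h'
      simp only [mem_prod, mem_Ioi, mem_Iio] at h h'
      linarith [h.1, h'.1]
    rw [hA, measure_union hdisj (measurableSet_Iio.prod measurableSet_Iio), hP,
      Measure.prod_prod, Measure.prod_prod, hIoi, hIio]
    rw [← mul_add, ENNReal.add_halves, mul_one]
  -- put it together
  have hsum2 : (∫ p, g p ∂P) + (∫ p, g p.swap ∂P) = 1 := by
    rw [← integral_add hint hint', integral_congr_ae hae,
      integral_indicator_const (2 : ℝ) hAm, Measure.real, hPA]
    norm_num [ENNReal.toReal_div]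
  rw [hI]
  rw [← hswap] at hsum2
  linarith
end

section
/- Let V₁, V₂, … be the exchangeable ±1 sequence obtained from the geometric paintbox: J₁, J₂, … i.i.d. with P(J = j) = 2^{−j}, Z₁, Z₂, … i.i.d. uniform on {±1} independent of the J's, and V_i = Z_{J_i}. Then the de Finetti mixing measure of (V₁, V₂, …) is such that for every n, P(V₁ = ⋯ = Vₙ = 1) = ∫₀¹ sⁿ ds = 1/(n+1). -/
open MeasureTheory ProbabilityTheory

/-- Codomain family for the joint independence of the `J`'s (valued in `ℕ`)
and the `Z`'s (valued in `ℤ`). -/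
abbrev paintboxCodomain : ℕ ⊕ ℕ → Type := fun s => Sum.rec (fun _ => ℕ) (fun _ => ℤ) s

noncomputable def pbq : ℕ → ENNReal := fun k => if k = 0 then 0 else 2⁻¹ ^ k

lemma pbq_tsum : ∑' k, pbq k = 1 := by
  have h : ∑' k, pbq k = pbq 0 + ∑' k, pbq (k + 1) :=
    tsum_eq_zero_add' (f := pbq) ENNReal.summable
  rw [h]
  simp only [pbq, if_neg (Nat.succ_ne_zero _), if_pos rfl, zero_add]
  rw [show (fun k : ℕ => (2⁻¹ : ENNReal) ^ (k + 1)) = fun k : ℕ => 2⁻¹ ^ k * 2⁻¹ by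
    funext k; rw [pow_succ]]
  rw [ENNReal.tsum_mul_right, ENNReal.tsum_geometric, ENNReal.one_sub_inv_two]
  rw [ENNReal.inv_mul_cancel (by norm_num) (by norm_num)]
  norm_num

lemma tsum_pow_fin (a : ℕ → ENNReal) (n : ℕ) :
    (∑' k, a k) ^ n = ∑' j : Fin n → ℕ, ∏ i, a (j i) := by
  induction n with
  | zero =>
    simp only [pow_zero, Finset.univ_eq_empty, Finset.prod_empty]
    exact (tsum_eq_single (f := fun _ : Fin 0 → ℕ => (1 : ENNReal)) Fin.elim0
      (fun b hb => absurd (funext fun i => i.elim0) hb)).symm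
  | succ n ih =>
    rw [pow_succ', ih,
      ← (Fin.consEquiv (fun _ : Fin (n + 1) => ℕ)).tsum_eq, ENNReal.tsum_prod',
      ← ENNReal.tsum_mul_right]
    congr 1; funext k
    rw [← ENNReal.tsum_mul_left]
    congr 1; funext j
    rw [Fin.prod_univ_succ]
    simp [Fin.consEquiv]

section Space
variable {Ω : Type} [MeasurableSpace Ω] (μ : Measure Ω)

lemma prod_ind {n : ℕ} (A : ℕ → Set Ω) (a : ℕ → ENNReal) (j : Fin n → ℕ) (ω : Ω) :
    ∏ i, (A (j i)).indicator (fun _ => a (j i)) ω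
      = (⋂ i, A (j i)).indicator (fun _ => ∏ i, a (j i)) ω := by
  by_cases h : ω ∈ ⋂ i, A (j i)
  · rw [Set.indicator_of_mem h]
    exact Finset.prod_congr rfl fun i _ =>
      Set.indicator_of_mem (Set.mem_iInter.1 h i) _
  · rw [Set.indicator_of_notMem h]
    rw [Set.mem_iInter] at h
    push_neg at h
    obtain ⟨i, hi⟩ := h
    exact Finset.prod_eq_zero (Finset.mem_univ i) (Set.indicator_of_notMem hi _)

lemma lintegral_pow_expand (A : ℕ → Set Ω) (hA : ∀ k, MeasurableSet (A k))
    (a : ℕ → ENNReal) (n : ℕ) :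
    ∫⁻ ω, (∑' k, (A k).indicator (fun _ => a k) ω) ^ n ∂μ
      = ∑' j : Fin n → ℕ, (∏ i, a (j i)) * μ (⋂ i, A (j i)) := by
  have h1 : ∀ ω, (∑' k, (A k).indicator (fun _ => a k) ω) ^ n
      = ∑' j : Fin n → ℕ, (⋂ i, A (j i)).indicator (fun _ => ∏ i, a (j i)) ω := by
    intro ω
    rw [tsum_pow_fin (fun k => (A k).indicator (fun _ => a k) ω) n]
    exact tsum_congr fun j => prod_ind A a j ω
  rw [lintegral_congr h1,
    lintegral_tsum (f := fun (j : Fin n → ℕ) (ω : Ω) =>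
      (⋂ i, A (j i)).indicator (fun _ => ∏ i, a (j i)) ω)
      fun j => ((measurable_const.indicator
      (MeasurableSet.iInter fun i => hA (j i)))).aemeasurable]
  exact tsum_congr fun j =>
    lintegral_indicator_const (MeasurableSet.iInter fun i => hA (j i)) _

noncomputable def pbF (n : ℕ) : ENNReal :=
  ∑' j : Fin n → ℕ, (∏ i, pbq (j i)) * 2⁻¹ ^ (Finset.univ.image j).card

lemma iInter_eq_biInter {n : ℕ} (A : ℕ → Set Ω) (j : Fin n → ℕ) :
    ⋂ i, A (j i) = ⋂ k ∈ Finset.univ.image j, A k := by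
  ext ω
  simp only [Set.mem_iInter, Finset.mem_image, Finset.mem_univ, true_and]
  aesop

lemma M1 (A : ℕ → Set Ω) (hA : ∀ k, MeasurableSet (A k))
    (hAprod : ∀ t : Finset ℕ, μ (⋂ k ∈ t, A k) = 2⁻¹ ^ t.card) (n : ℕ) :
    ∫⁻ ω, (∑' k, (A k).indicator (fun _ => pbq k) ω) ^ n ∂μ = pbF n := by
  rw [lintegral_pow_expand μ A hA pbq n]
  exact tsum_congr fun j => by rw [iInter_eq_biInter, hAprod]

end Space

section Space2
variable {Ω : Type} [MeasurableSpace Ω] (μ : Measure Ω)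

lemma ind_mul_ind (s T : Set Ω) (c : ENNReal) (ω : Ω) :
    s.indicator (fun _ => (1 : ENNReal)) ω * T.indicator (fun _ => c) ω
      = (s ∩ T).indicator (fun _ => c) ω := by
  by_cases hs : ω ∈ s <;> by_cases hT : ω ∈ T <;>
    simp [Set.indicator_of_mem, Set.indicator_of_notMem, hs, hT, Set.mem_inter_iff]

lemma hAprod_shift (A : ℕ → Set Ω)
    (hAprod : ∀ t : Finset ℕ, μ (⋂ k ∈ t, A k) = 2⁻¹ ^ t.card) :
    ∀ t : Finset ℕ, μ (⋂ k ∈ t, A (k + 1)) = 2⁻¹ ^ t.card := by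
  intro t
  have h : (⋂ k ∈ t, A (k + 1)) = ⋂ k ∈ t.map ⟨Nat.succ, Nat.succ_injective⟩, A k := by
    ext ω; simp
  rw [h, hAprod, Finset.card_map]

lemma M3 (A : ℕ → Set Ω) (hA : ∀ k, MeasurableSet (A k))
    (hAprod : ∀ t : Finset ℕ, μ (⋂ k ∈ t, A k) = 2⁻¹ ^ t.card) (m : ℕ) :
    ∫⁻ ω, (A 1).indicator (fun _ => (1 : ENNReal)) ω
        * (∑' k, (A (k + 1)).indicator (fun _ => pbq k) ω) ^ m ∂μ
      = 2⁻¹ * pbF m := by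
  have h1 : ∀ ω, (A 1).indicator (fun _ => (1 : ENNReal)) ω
      * (∑' k, (A (k + 1)).indicator (fun _ => pbq k) ω) ^ m
      = ∑' j : Fin m → ℕ, (A 1 ∩ ⋂ i, A (j i + 1)).indicator
          (fun _ => ∏ i, pbq (j i)) ω := by
    intro ω
    rw [tsum_pow_fin (fun k => (A (k + 1)).indicator (fun _ => pbq k) ω) m,
      ← ENNReal.tsum_mul_left]
    refine tsum_congr fun j => ?_
    rw [show (∏ i, (A (j i + 1)).indicator (fun _ => pbq (j i)) ω)
        = (⋂ i, A (j i + 1)).indicator (fun _ => ∏ i, pbq (j i)) ω from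
      prod_ind (fun k => A (k + 1)) pbq j ω]
    exact ind_mul_ind _ _ _ ω
  rw [lintegral_congr h1,
    lintegral_tsum (f := fun (j : Fin m → ℕ) (ω : Ω) =>
      (A 1 ∩ ⋂ i, A (j i + 1)).indicator (fun _ => ∏ i, pbq (j i)) ω)
      fun j => ((measurable_const.indicator ((hA 1).inter
        (MeasurableSet.iInter fun i => hA (j i + 1))))).aemeasurable]
  rw [pbF, ← ENNReal.tsum_mul_left]
  refine tsum_congr fun j => ?_
  rw [lintegral_indicator_const ((hA 1).inter
    (MeasurableSet.iInter fun i => hA (j i + 1))) _]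
  by_cases hz : ∃ i, j i = 0
  · obtain ⟨i, hi⟩ := hz
    have : (∏ i, pbq (j i)) = 0 :=
      Finset.prod_eq_zero (Finset.mem_univ i) (by simp [hi, pbq])
    rw [this]; ring
  · push_neg at hz
    have hset : A 1 ∩ ⋂ i, A (j i + 1)
        = ⋂ k ∈ insert 1 ((Finset.univ.image j).map ⟨Nat.succ, Nat.succ_injective⟩), A k := by
      ext ω
      simp only [Set.mem_inter_iff, Set.mem_iInter, Finset.mem_insert, Finset.mem_map,
        Finset.mem_image, Finset.mem_univ, true_and, Function.Embedding.coeFn_mk]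
      aesop
    have hnot : (1 : ℕ) ∉ (Finset.univ.image j).map ⟨Nat.succ, Nat.succ_injective⟩ := by
      simp only [Finset.mem_map, Finset.mem_image, Finset.mem_univ, true_and,
        Function.Embedding.coeFn_mk]
      rintro ⟨k, ⟨i, rfl⟩, hk⟩
      exact hz i (Nat.succ_injective hk)
    rw [hset, hAprod, Finset.card_insert_of_notMem hnot, Finset.card_map, pow_succ]
    ring

end Space2

section Space3
variable {Ω : Type} [MeasurableSpace Ω] (μ : Measure Ω)

lemma ind_const_mul (s : Set Ω) (c d : ENNReal) (ω : Ω) :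
    c * s.indicator (fun _ => d) ω = s.indicator (fun _ => c * d) ω := by
  by_cases hs : ω ∈ s <;>
    simp [Set.indicator_of_mem, Set.indicator_of_notMem, hs]

lemma Sdecomp (A : ℕ → Set Ω) (ω : Ω) :
    (∑' k, (A k).indicator (fun _ => pbq k) ω)
      = 2⁻¹ * ((A 1).indicator (fun _ => (1 : ENNReal)) ω
          + ∑' k, (A (k + 1)).indicator (fun _ => pbq k) ω) := by
  have htail : ∀ b : ℕ, (A (b + 2)).indicator (fun _ => pbq (b + 2)) ω
      = 2⁻¹ * (A (b + 2)).indicator (fun _ => pbq (b + 1)) ω := by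
    intro b
    rw [ind_const_mul]
    congr 1; funext _
    simp only [pbq]
    rw [if_neg (by omega), if_neg (by omega), pow_succ']
  calc (∑' k, (A k).indicator (fun _ => pbq k) ω)
      = (A 0).indicator (fun _ => pbq 0) ω
        + ((A 1).indicator (fun _ => pbq 1) ω
          + ∑' b, (A (b + 2)).indicator (fun _ => pbq (b + 2)) ω) := by
        rw [tsum_eq_zero_add' (f := fun k => (A k).indicator (fun _ => pbq k) ω)
          ENNReal.summable,
          tsum_eq_zero_add' (f := fun k => (A (k + 1)).indicator (fun _ => pbq (k + 1)) ω)
          ENNReal.summable]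
    _ = (A 1).indicator (fun _ => (2⁻¹ : ENNReal)) ω
        + ∑' b, 2⁻¹ * (A (b + 2)).indicator (fun _ => pbq (b + 1)) ω := by
        rw [show (A 0).indicator (fun _ => pbq 0) ω = 0 by simp [pbq], zero_add]
        congr 1
        · congr 1; funext _; simp [pbq]
        · exact tsum_congr htail
    _ = 2⁻¹ * ((A 1).indicator (fun _ => (1 : ENNReal)) ω
          + ∑' k, (A (k + 1)).indicator (fun _ => pbq k) ω) := by
        rw [mul_add, ind_const_mul (A 1) 2⁻¹ 1, mul_one, ENNReal.tsum_mul_left]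
        congr 1
        rw [tsum_eq_zero_add' (f := fun k => (A (k + 1)).indicator (fun _ => pbq k) ω)
          ENNReal.summable]
        rw [show (A (0 + 1)).indicator (fun _ => pbq 0) ω = 0 by simp [pbq], zero_add]

lemma Rrec (A : ℕ → Set Ω) (hA : ∀ k, MeasurableSet (A k)) [IsProbabilityMeasure μ]
    (hAprod : ∀ t : Finset ℕ, μ (⋂ k ∈ t, A k) = 2⁻¹ ^ t.card) (n : ℕ) :
    pbF n = 2⁻¹ ^ n * (∑ k ∈ Finset.range n,
        2⁻¹ * pbF (n - (k + 1)) * (n.choose (k + 1) : ENNReal) + pbF n) := by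
  have hB : Measurable fun ω => (A 1).indicator (fun _ => (1 : ENNReal)) ω :=
    measurable_const.indicator (hA 1)
  have hS' : Measurable fun ω => ∑' k, (A (k + 1)).indicator (fun _ => pbq k) ω :=
    Measurable.ennreal_tsum fun k => measurable_const.indicator (hA (k + 1))
  have key : ∫⁻ ω, (∑' k, (A k).indicator (fun _ => pbq k) ω) ^ n ∂μ
      = 2⁻¹ ^ n * ∑ k ∈ Finset.range (n + 1),
          (∫⁻ ω, ((A 1).indicator (fun _ => (1 : ENNReal)) ω) ^ k
            * (∑' k', (A (k' + 1)).indicator (fun _ => pbq k') ω) ^ (n - k) ∂μ)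
          * (n.choose k : ENNReal) := by
    have hpt : ∀ ω, (∑' k, (A k).indicator (fun _ => pbq k) ω) ^ n
        = 2⁻¹ ^ n * ∑ k ∈ Finset.range (n + 1),
            ((A 1).indicator (fun _ => (1 : ENNReal)) ω) ^ k
            * (∑' k', (A (k' + 1)).indicator (fun _ => pbq k') ω) ^ (n - k)
            * (n.choose k : ENNReal) := by
      intro ω
      rw [Sdecomp A ω, mul_pow, add_pow]
    rw [lintegral_congr hpt, lintegral_const_mul' _ _ (by simp),
      lintegral_finset_sum (f := fun k ω => (A 1).indicator (fun _ => (1 : ENNReal)) ω ^ k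
          * (∑' k', (A (k' + 1)).indicator (fun _ => pbq k') ω) ^ (n - k)
          * (n.choose k : ENNReal)) _ fun k _ =>
        ((hB.pow_const k).mul (hS'.pow_const (n - k))).mul measurable_const]
    congr 1
    exact Finset.sum_congr rfl fun k _ =>
      lintegral_mul_const' _ _ (by simp)
  rw [M1 μ A hA hAprod n] at key
  have hsum : ∑ k ∈ Finset.range (n + 1),
      (∫⁻ ω, ((A 1).indicator (fun _ => (1 : ENNReal)) ω) ^ k
        * (∑' k', (A (k' + 1)).indicator (fun _ => pbq k') ω) ^ (n - k) ∂μ)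
      * (n.choose k : ENNReal)
      = ∑ k ∈ Finset.range n,
        2⁻¹ * pbF (n - (k + 1)) * (n.choose (k + 1) : ENNReal) + pbF n := by
    rw [Finset.sum_range_succ']
    congr 1
    · refine Finset.sum_congr rfl fun k hk => ?_
      congr 1
      have hpt : ∀ ω, ((A 1).indicator (fun _ => (1 : ENNReal)) ω) ^ (k + 1)
          * (∑' k', (A (k' + 1)).indicator (fun _ => pbq k') ω) ^ (n - (k + 1))
          = (A 1).indicator (fun _ => (1 : ENNReal)) ω
          * (∑' k', (A (k' + 1)).indicator (fun _ => pbq k') ω) ^ (n - (k + 1)) := by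
        intro ω
        congr 1
        by_cases h : ω ∈ A 1 <;>
          simp [Set.indicator_of_mem, Set.indicator_of_notMem, h]
      rw [lintegral_congr hpt, M3 μ A hA hAprod (n - (k + 1))]
    · simp only [pow_zero, one_mul, Nat.choose_zero_right, Nat.cast_one, mul_one,
        Nat.sub_zero]
      exact M1 μ (fun k => A (k + 1)) (fun k => hA (k + 1)) (hAprod_shift μ A hAprod) n
  conv_lhs => rw [key, hsum]

end Space3

lemma pbF_le_one (n : ℕ) : pbF n ≤ 1 := by
  have h : pbF n ≤ ∑' j : Fin n → ℕ, ∏ i, pbq (j i) := by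
    refine ENNReal.tsum_le_tsum fun j => ?_
    calc (∏ i, pbq (j i)) * 2⁻¹ ^ (Finset.univ.image j).card
        ≤ (∏ i, pbq (j i)) * 1 :=
          mul_le_mul_right (pow_le_one' (by norm_num) _) _
      _ = ∏ i, pbq (j i) := mul_one _
  calc pbF n ≤ ∑' j : Fin n → ℕ, ∏ i, pbq (j i) := h
    _ = (∑' k, pbq k) ^ n := (tsum_pow_fin pbq n).symm
    _ = 1 := by rw [pbq_tsum, one_pow]

lemma pbF_zero : pbF 0 = 1 := by
  rw [pbF]
  rw [tsum_eq_single (f := fun j : Fin 0 → ℕ =>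
      (∏ i, pbq (j i)) * 2⁻¹ ^ (Finset.univ.image j).card) Fin.elim0
    (fun b hb => absurd (funext fun i => i.elim0) hb)]
  simp

lemma choose_sum_nat (n : ℕ) :
    ∑ k ∈ Finset.range n, (n + 1).choose (k + 1) + 2 = 2 ^ (n + 1) := by
  have h := Nat.sum_range_choose (n + 1)
  rw [Finset.sum_range_succ', Finset.sum_range_succ] at h
  simp only [Nat.choose_zero_right, Nat.choose_self] at h
  omega

lemma choose_sum_real (n : ℕ) :
    ∑ k ∈ Finset.range n, (n.choose (k + 1) : ℝ) / ((n - (k + 1) : ℕ) + 1)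
      = (2 ^ (n + 1) - 2) / (n + 1) := by
  have hterm : ∀ k ∈ Finset.range n,
      (n.choose (k + 1) : ℝ) / ((n - (k + 1) : ℕ) + 1)
        = ((n + 1).choose (k + 1) : ℝ) / (n + 1) := by
    intro k hk
    rw [Finset.mem_range] at hk
    have h1 : (n - (k + 1) : ℕ) + 1 = n - k := by omega
    have h2 : n.choose (k + 1) * (n + 1) = (n + 1).choose (k + 1) * (n - k) := by
      have := Nat.choose_mul_succ_eq n (k + 1)
      rw [this]; congr 1; omega
    have hcast : ((n - k : ℕ) : ℝ) = (n : ℝ) - k := Nat.cast_sub (by omega)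
    have hnk : (0 : ℝ) < ((n - k : ℕ) : ℝ) := by
      rw [hcast]
      have : (k : ℝ) < n := by exact_mod_cast hk
      linarith
    rw [show ((n - (k + 1) : ℕ) : ℝ) + 1 = ((n - k : ℕ) : ℝ) by
      exact_mod_cast congrArg (Nat.cast (R := ℝ)) h1]
    rw [div_eq_div_iff (ne_of_gt hnk) (by positivity)]
    have h2' : (n.choose (k + 1) : ℝ) * ((n : ℝ) + 1)
        = ((n + 1).choose (k + 1) : ℝ) * ((n - k : ℕ) : ℝ) := by
      exact_mod_cast congrArg (Nat.cast (R := ℝ)) h2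
    linarith [h2']
  rw [Finset.sum_congr rfl hterm, ← Finset.sum_div]
  have h3 : ∑ k ∈ Finset.range n, ((n + 1).choose (k + 1) : ℝ) = 2 ^ (n + 1) - 2 := by
    have := choose_sum_nat n
    have : ((∑ k ∈ Finset.range n, (n + 1).choose (k + 1) : ℕ) : ℝ) + 2 = 2 ^ (n + 1) := by
      exact_mod_cast congrArg (Nat.cast (R := ℝ)) this
    push_cast at this
    linarith
  rw [h3]

lemma cancel_aux (a c x y : ENNReal) (hane : a ≠ ⊤) (ha1 : a.toReal < 1)
    (hx : x ≠ ⊤) (hy : y ≠ ⊤) (hc : c ≠ ⊤)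
    (h1 : x = a * (c + x))
    (h2 : y.toReal = a.toReal * (c.toReal + y.toReal)) : x = y := by
  have h1' : x.toReal = a.toReal * (c.toReal + x.toReal) := by
    calc x.toReal = (a * (c + x)).toReal := by rw [← h1]
      _ = a.toReal * (c.toReal + x.toReal) := by
          rw [ENNReal.toReal_mul, ENNReal.toReal_add hc hx]
  have h3 : (1 - a.toReal) * (x.toReal - y.toReal) = 0 := by
    linear_combination h1' - h2
  rcases mul_eq_zero.1 h3 with h | h
  · linarith
  · exact (ENNReal.toReal_eq_toReal_iff' hx hy).1 (by linarith)

lemma pbF_val {Ω : Type} [MeasurableSpace Ω] (μ : Measure Ω) [IsProbabilityMeasure μ]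
    (A : ℕ → Set Ω) (hA : ∀ k, MeasurableSet (A k))
    (hAprod : ∀ t : Finset ℕ, μ (⋂ k ∈ t, A k) = 2⁻¹ ^ t.card) :
    ∀ n, pbF n = ((n : ENNReal) + 1)⁻¹ := by
  intro n
  induction n using Nat.strong_induction_on with
  | _ n ih =>
    match n with
    | 0 => simp [pbF_zero]
    | Nat.succ m =>
      set N := m + 1 with hN
      set c : ENNReal := ∑ k ∈ Finset.range N,
        2⁻¹ * (((N - (k + 1) : ℕ) : ENNReal) + 1)⁻¹ * (N.choose (k + 1) : ENNReal) with hc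
      have hrec := Rrec μ A hA hAprod N
      have hsum : ∑ k ∈ Finset.range N,
          2⁻¹ * pbF (N - (k + 1)) * (N.choose (k + 1) : ENNReal) = c := by
        refine Finset.sum_congr rfl fun k hk => ?_
        rw [ih (N - (k + 1)) (by omega)]
      rw [hsum] at hrec
      have hb0 : ∀ d : ℕ, ((d : ENNReal) + 1) ≠ 0 :=
        fun d h => one_ne_zero (add_eq_zero.1 h).2
      have hcne : c ≠ ⊤ := by
        refine (ENNReal.sum_lt_top.2 ?_).ne
        intro k hk
        exact (ENNReal.mul_ne_top (ENNReal.mul_ne_top (by simp)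
          (ENNReal.inv_ne_top.2 (hb0 _))) (ENNReal.natCast_ne_top _)).lt_top
      have hxne : pbF N ≠ ⊤ := ((pbF_le_one N).trans_lt ENNReal.one_lt_top).ne
      have hyne : (((N : ℕ) : ENNReal) + 1)⁻¹ ≠ ⊤ :=
        ENNReal.inv_ne_top.2 (hb0 _)
      refine cancel_aux (2⁻¹ ^ N) c (pbF N) (((N : ℕ) : ENNReal) + 1)⁻¹
        (by simp) ?_ hxne hyne hcne hrec ?_
      · rw [ENNReal.toReal_pow]
        simp only [ENNReal.toReal_inv, ENNReal.toReal_ofNat]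
        exact pow_lt_one₀ (by norm_num) (by norm_num) (by omega)
      · have hcreal : c.toReal = ∑ k ∈ Finset.range N,
            (1 / 2 : ℝ) * (1 / (((N - (k + 1) : ℕ) : ℝ) + 1)) * (N.choose (k + 1) : ℝ) := by
          rw [hc, ENNReal.toReal_sum (fun k hk =>
            ENNReal.mul_ne_top (ENNReal.mul_ne_top (by simp)
              (ENNReal.inv_ne_top.2 (hb0 _))) (ENNReal.natCast_ne_top _))]
          refine Finset.sum_congr rfl fun k hk => ?_
          rw [ENNReal.toReal_mul, ENNReal.toReal_mul, ENNReal.toReal_inv,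
            ENNReal.toReal_inv,
            ENNReal.toReal_add (ENNReal.natCast_ne_top _) ENNReal.one_ne_top,
            ENNReal.toReal_natCast,
            ENNReal.toReal_natCast]
          norm_num
        have hyreal : ((((N : ℕ) : ENNReal) + 1)⁻¹).toReal = (((N : ℕ) : ℝ) + 1)⁻¹ := by
          rw [ENNReal.toReal_inv,
            ENNReal.toReal_add (ENNReal.natCast_ne_top _) ENNReal.one_ne_top,
            ENNReal.toReal_natCast]
          norm_num
        rw [hyreal, hcreal, ENNReal.toReal_pow]
        simp only [ENNReal.toReal_inv, ENNReal.toReal_ofNat]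
        have hsr : ∑ k ∈ Finset.range N,
            (1 / 2 : ℝ) * (1 / (((N - (k + 1) : ℕ) : ℝ) + 1)) * (N.choose (k + 1) : ℝ)
            = (1 / 2) * ((2 ^ (N + 1) - 2) / ((N : ℝ) + 1)) := by
          rw [← choose_sum_real N, Finset.mul_sum]
          exact Finset.sum_congr rfl fun k hk => by ring
        rw [hsr]
        have hN0 : ((N : ℕ) : ℝ) + 1 > 0 := by positivity
        have h2N : (2 : ℝ) ^ N ≠ 0 := by positivity
        rw [inv_pow 2 N] at *
        field_simp
        ring

section Indep
variable {Ω : Type} [MeasurableSpace Ω] (μ : Measure Ω)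
  (J : ℕ → Ω → ℕ) (Z : ℕ → Ω → ℤ)

lemma indep_apply
    (hindep : iIndepFun (m := fun s : ℕ ⊕ ℕ =>
        Sum.rec (motive := fun s => MeasurableSpace (paintboxCodomain s))
          (fun _ => inferInstance) (fun _ => inferInstance) s)
      (fun s : ℕ ⊕ ℕ =>
        Sum.rec (motive := fun s => Ω → paintboxCodomain s)
          (fun i => J i) (fun j => Z j) s) μ)
    (s : Finset ℕ) (jv : ℕ → ℕ) (t : Finset ℕ) :
    μ ((⋂ i ∈ s, J i ⁻¹' {jv i}) ∩ ⋂ k ∈ t, Z k ⁻¹' {1})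
      = (∏ i ∈ s, μ (J i ⁻¹' {jv i})) * ∏ k ∈ t, μ (Z k ⁻¹' {1}) := by
  classical
  set S : Finset (ℕ ⊕ ℕ) :=
    s.map ⟨Sum.inl, Sum.inl_injective⟩ ∪ t.map ⟨Sum.inr, Sum.inr_injective⟩ with hS
  set sets : ∀ x : ℕ ⊕ ℕ, Set (paintboxCodomain x) := fun x =>
    Sum.rec (motive := fun x => Set (paintboxCodomain x))
      (fun i => ({jv i} : Set ℕ)) (fun _ => ({1} : Set ℤ)) x with hsets
  have H : ∀ x, x ∈ S → MeasurableSet[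
      (Sum.rec (motive := fun s => MeasurableSpace (paintboxCodomain s))
        (fun _ => inferInstance) (fun _ => inferInstance) x)] (sets x) := by
    intro x _
    cases x with
    | inl i => exact measurableSet_singleton _
    | inr k => exact measurableSet_singleton _
  have key := hindep.measure_inter_preimage_eq_mul S (sets := sets) H
  have hdisj : Disjoint (s.map ⟨Sum.inl, Sum.inl_injective⟩)
      (t.map ⟨Sum.inr, Sum.inr_injective⟩) := by
    rw [Finset.disjoint_left]
    rintro a ha hb
    obtain ⟨y, _, rfl⟩ := Finset.mem_map.1 ha
    obtain ⟨y', _, h⟩ := Finset.mem_map.1 hb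
    exact absurd h (by simp)
  have hL : (⋂ x ∈ S, (Sum.rec (motive := fun s => Ω → paintboxCodomain s)
        (fun i => J i) (fun j => Z j) x) ⁻¹' sets x)
      = (⋂ i ∈ s, J i ⁻¹' {jv i}) ∩ ⋂ k ∈ t, Z k ⁻¹' {1} := by
    ext ω
    simp only [Set.mem_iInter, Set.mem_inter_iff]
    constructor
    · intro h
      refine ⟨fun i hi => h (Sum.inl i) ?_, fun k hk => h (Sum.inr k) ?_⟩
      · exact Finset.mem_union_left _ (Finset.mem_map.2 ⟨i, hi, rfl⟩)
      · exact Finset.mem_union_right _ (Finset.mem_map.2 ⟨k, hk, rfl⟩)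
    · rintro ⟨h1, h2⟩ x hx
      rcases Finset.mem_union.1 hx with hx | hx <;>
        obtain ⟨y, hy, rfl⟩ := Finset.mem_map.1 hx
      · exact h1 y hy
      · exact h2 y hy
  have hR : (∏ x ∈ S, μ ((Sum.rec (motive := fun s => Ω → paintboxCodomain s)
        (fun i => J i) (fun j => Z j) x) ⁻¹' sets x))
      = (∏ i ∈ s, μ (J i ⁻¹' {jv i})) * ∏ k ∈ t, μ (Z k ⁻¹' {1}) := by
    rw [hS, Finset.prod_union hdisj, Finset.prod_map, Finset.prod_map]
    rfl
  rw [hL, hR] at key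
  exact key

end Indep

/-- For the exchangeable sequence `Vᵢ = Z_{Jᵢ}` from the geometric paintbox,
the de Finetti mixing measure is uniform: for every `n`,
`P(V₁ = ⋯ = Vₙ = 1) = ∫₀¹ sⁿ ds = 1/(n+1)`. -/
theorem paintbox_all_ones
    {Ω : Type} [MeasurableSpace Ω] (μ : Measure Ω) [IsProbabilityMeasure μ]
    (J : ℕ → Ω → ℕ) (Z : ℕ → Ω → ℤ)
    (hJmeas : ∀ i, Measurable (J i)) (hZmeas : ∀ j, Measurable (Z j))
    (hindep : iIndepFun (m := fun s : ℕ ⊕ ℕ =>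
        Sum.rec (motive := fun s => MeasurableSpace (paintboxCodomain s))
          (fun _ => inferInstance) (fun _ => inferInstance) s)
      (fun s : ℕ ⊕ ℕ =>
        Sum.rec (motive := fun s => Ω → paintboxCodomain s)
          (fun i => J i) (fun j => Z j) s) μ)
    (hJlaw : ∀ i, ∀ j : ℕ,
      μ (J i ⁻¹' {j}) = if j = 0 then 0 else (2 : ENNReal)⁻¹ ^ j)
    (hZlaw : ∀ j, μ (Z j ⁻¹' {1}) = 1 / 2 ∧ μ (Z j ⁻¹' {-1}) = 1 / 2)
    (n : ℕ) :
    μ {ω | ∀ i < n, Z (J i ω) ω = 1} = ((n : ENNReal) + 1)⁻¹ ∧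
      ((n : ENNReal) + 1)⁻¹ = ENNReal.ofReal (∫ s in (0:ℝ)..1, s ^ n) := by
  classical
  have hZhalf : ∀ (t : Finset ℕ), ∏ k ∈ t, μ (Z k ⁻¹' {1}) = 2⁻¹ ^ t.card := by
    intro t
    rw [Finset.prod_congr rfl (fun k _ => by rw [(hZlaw k).1, one_div]),
      Finset.prod_const]
  have hAprod : ∀ t : Finset ℕ, μ (⋂ k ∈ t, Z k ⁻¹' {1}) = 2⁻¹ ^ t.card := by
    intro t
    have h := indep_apply μ J Z hindep ∅ (fun _ => 0) t
    simp only [Finset.notMem_empty, Set.iInter_of_empty, Set.iInter_iInter_eq_left,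
      Finset.prod_empty, one_mul] at h
    rw [Set.iInter_univ, Set.univ_inter] at h
    rw [h, hZhalf]
  constructor
  · -- main computation
    set jvf : (Fin n → ℕ) → ℕ → ℕ :=
      fun j i => if h : i < n then j ⟨i, h⟩ else 0 with hjvf
    have hev : {ω | ∀ i < n, Z (J i ω) ω = 1}
        = ⋃ j : Fin n → ℕ, ⋂ i : Fin n, (J (i : ℕ) ⁻¹' {j i} ∩ Z (j i) ⁻¹' {1}) := by
      ext ω
      simp only [Set.mem_setOf_eq, Set.mem_iUnion, Set.mem_iInter, Set.mem_inter_iff,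
        Set.mem_preimage, Set.mem_singleton_iff]
      constructor
      · intro h
        exact ⟨fun i => J i ω, fun i => ⟨rfl, h i i.isLt⟩⟩
      · rintro ⟨j, hj⟩ i hi
        rw [(hj ⟨i, hi⟩).1]
        exact (hj ⟨i, hi⟩).2
    have hdisj : Pairwise (Function.onFun Disjoint (fun j : Fin n → ℕ =>
        ⋂ i : Fin n, (J (i : ℕ) ⁻¹' {j i} ∩ Z (j i) ⁻¹' {1}))) := by
      intro j j' hne
      rw [Function.onFun, Set.disjoint_left]
      intro ω hω hω'
      apply hne
      funext i
      have h1 := (Set.mem_iInter.1 hω i).1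
      have h2 := (Set.mem_iInter.1 hω' i).1
      simp only [Set.mem_preimage, Set.mem_singleton_iff] at h1 h2
      rw [← h1, ← h2]
    have hmeas : ∀ j : Fin n → ℕ, MeasurableSet
        (⋂ i : Fin n, (J (i : ℕ) ⁻¹' {j i} ∩ Z (j i) ⁻¹' {1})) :=
      fun j => MeasurableSet.iInter fun i =>
        ((hJmeas i) (measurableSet_singleton _)).inter
          ((hZmeas _) (measurableSet_singleton _))
    rw [hev, measure_iUnion hdisj hmeas]
    have hterm : ∀ j : Fin n → ℕ,
        μ (⋂ i : Fin n, (J (i : ℕ) ⁻¹' {j i} ∩ Z (j i) ⁻¹' {1}))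
          = (∏ i, pbq (j i)) * 2⁻¹ ^ (Finset.univ.image j).card := by
      intro j
      have hset : (⋂ i : Fin n, (J (i : ℕ) ⁻¹' {j i} ∩ Z (j i) ⁻¹' {1}))
          = (⋂ i ∈ Finset.range n, J i ⁻¹' {jvf j i})
            ∩ ⋂ k ∈ Finset.univ.image j, Z k ⁻¹' {1} := by
        ext ω
        simp only [Set.mem_iInter, Set.mem_inter_iff, Set.mem_preimage,
          Set.mem_singleton_iff, Finset.mem_range, Finset.mem_image, Finset.mem_univ,
          true_and]
        constructor
        · intro h
          refine ⟨fun i hi => ?_, fun k hk => ?_⟩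
          · rw [hjvf]; simp only [dif_pos hi]
            exact (h ⟨i, hi⟩).1
          · obtain ⟨i, rfl⟩ := hk
            exact (h i).2
        · rintro ⟨h1, h2⟩ i
          refine ⟨?_, h2 (j i) ⟨i, rfl⟩⟩
          have := h1 i.val i.isLt
          rw [hjvf] at this
          simpa [i.isLt] using this
      rw [hset, indep_apply μ J Z hindep (Finset.range n) (jvf j) (Finset.univ.image j),
        hZhalf]
      congr 1
      rw [← Fin.prod_univ_eq_prod_range (fun i => μ (J i ⁻¹' {jvf j i})) n]
      refine Finset.prod_congr rfl fun i _ => ?_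
      rw [show jvf j (i : ℕ) = j i by rw [hjvf]; simp [i.isLt]]
      rw [hJlaw (i : ℕ) (j i)]
      rfl
    rw [tsum_congr hterm]
    exact pbF_val μ (fun k => Z k ⁻¹' {1})
      (fun k => (hZmeas k) (measurableSet_singleton _)) hAprod n
  · rw [integral_pow]
    norm_num
    rw [ENNReal.ofReal_inv_of_pos (by positivity), ENNReal.ofReal_add
      (by positivity) zero_le_one, ENNReal.ofReal_natCast, ENNReal.ofReal_one]
end

section
/- Let p_n denote the probability that in the geometric paintbox partition of {1,…,n} (box j chosen with probability 2^{−j}), all blocks have even size. Then p_n satisfies the recursion p_n = Σ_{k even, 0 ≤ k ≤ n} C(n,k) 2^{−n} p_{n−k}' with the self-similarity p' = p (the remaining n−k elements form the same paintbox partition after rescaling), p₀ = 1, and its unique solution is p_n = 1/(n+1) for n even and p_n = 0 for n odd. -/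
open MeasureTheory ProbabilityTheory

section PaintboxAux
open scoped Classical

noncomputable def pbW {α : Type*} [Fintype α] (f : α → ℕ) : ENNReal :=
  ∏ i, (2:ENNReal)⁻¹ ^ (f i + 1)

def pbE {α : Type*} [Fintype α] (f : α → ℕ) : Prop :=
  ∀ j : ℕ, Even (Finset.univ.filter (fun i => f i = j)).card

noncomputable def pbQ (α : Type*) [Fintype α] : ENNReal :=
  ∑' f : α → ℕ, if pbE f then pbW f else 0

lemma pbQ_equiv {α β : Type*} [Fintype α] [Fintype β] (e : α ≃ β) : pbQ α = pbQ β := by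
  rw [pbQ, pbQ, ← Equiv.tsum_eq (Equiv.arrowCongr e (Equiv.refl ℕ))]
  apply tsum_congr
  intro f
  have happ : ∀ b, (Equiv.arrowCongr e (Equiv.refl ℕ)) f b = f (e.symm b) := by
    intro b; simp [Equiv.arrowCongr]
  have hE : pbE ((Equiv.arrowCongr e (Equiv.refl ℕ)) f) ↔ pbE f := by
    unfold pbE
    refine forall_congr' fun j => ?_
    have hc : (Finset.univ.filter (fun b => (Equiv.arrowCongr e (Equiv.refl ℕ)) f b = j)).card
        = (Finset.univ.filter (fun a => f a = j)).card := by
      refine Finset.card_bij' (fun b _ => e.symm b) (fun a _ => e a) ?_ ?_ ?_ ?_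
      · intro b hb
        simp only [Finset.mem_filter, Finset.mem_univ, true_and] at hb ⊢
        rw [← happ b]; exact hb
      · intro a ha
        simp only [Finset.mem_filter, Finset.mem_univ, true_and] at ha ⊢
        rw [happ]; simpa using ha
      · intro b _; simp
      · intro a _; simp
    rw [hc]
  have hW : pbW ((Equiv.arrowCongr e (Equiv.refl ℕ)) f) = pbW f := by
    unfold pbW
    rw [← Equiv.prod_comp e.symm (fun a => (2:ENNReal)⁻¹ ^ (f a + 1))]
    exact Finset.prod_congr rfl fun b _ => by rw [happ]
  by_cases h : pbE f
  · rw [if_pos h, if_pos (hE.mpr h), hW]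
  · rw [if_neg h, if_neg (fun hh => h (hE.mp hh))]

lemma pbQ_eq_one (α : Type*) [Fintype α] [IsEmpty α] : pbQ α = 1 := by
  rw [pbQ]
  have h1 : ∀ f : α → ℕ, (if pbE f then pbW f else 0) = 1 := by
    intro f
    rw [if_pos, pbW]
    · simp
    · intro j
      have : (Finset.univ : Finset α) = ∅ := Finset.univ_eq_empty
      simp [this]
  simp only [h1]
  exact tsum_eq_single (fun _ => 0)
    (fun b hb => absurd (funext fun a => (IsEmpty.false a).elim) hb)

section Rec
variable {n : ℕ}

noncomputable def pbPhi (T : Finset (Fin n)) (g : {i // i ∈ Tᶜ} → ℕ) : Fin n → ℕ :=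
  fun i => if h : i ∈ Tᶜ then g ⟨i, h⟩ + 1 else 0

lemma pbPhi_inj (T : Finset (Fin n)) : Function.Injective (pbPhi T) := by
  intro g g' h
  funext i
  have := congrFun h i.1
  rw [pbPhi, pbPhi, dif_pos i.2, dif_pos i.2] at this
  simpa using this

lemma pbPhi_zero_iff (T : Finset (Fin n)) (g : {i // i ∈ Tᶜ} → ℕ) (i : Fin n) :
    pbPhi T g i = 0 ↔ i ∈ T := by
  rw [pbPhi]
  by_cases h : i ∈ Tᶜ
  · rw [dif_pos h]; simp [Finset.mem_compl.mp h]
  · rw [dif_neg h]; simp [Finset.notMem_compl.mp h]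

lemma pbPhi_range (T : Finset (Fin n)) (f : Fin n → ℕ) :
    f ∈ Set.range (pbPhi T) ↔ Finset.univ.filter (fun i => f i = 0) = T := by
  constructor
  · rintro ⟨g, rfl⟩
    ext i
    simp [pbPhi_zero_iff]
  · intro h
    refine ⟨fun i => f i.1 - 1, funext fun i => ?_⟩
    have hiT : i ∈ T ↔ f i = 0 := by
      rw [← h]; simp
    rw [pbPhi]
    by_cases hi : i ∈ Tᶜ
    · rw [dif_pos hi]
      have : f i ≠ 0 := fun h0 => (Finset.mem_compl.mp hi) (hiT.mpr h0)
      show f i - 1 + 1 = f i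
      omega
    · rw [dif_neg hi]
      exact (hiT.mp (Finset.notMem_compl.mp hi)).symm

lemma pbPhi_apply_compl (T : Finset (Fin n)) (g : {i // i ∈ Tᶜ} → ℕ)
    (i : {i // i ∈ Tᶜ}) : pbPhi T g i.1 = g i + 1 := by
  simp only [pbPhi, dif_pos i.2]

lemma pbPhi_W (T : Finset (Fin n)) (g : {i // i ∈ Tᶜ} → ℕ) :
    pbW (pbPhi T g) = (2:ENNReal)⁻¹ ^ n * pbW g := by
  rw [pbW, ← Finset.prod_mul_prod_compl T]
  have h1 : ∏ i ∈ T, (2:ENNReal)⁻¹ ^ (pbPhi T g i + 1) = (2:ENNReal)⁻¹ ^ T.card := by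
    rw [← Finset.prod_const]
    refine Finset.prod_congr rfl fun i hi => ?_
    have : pbPhi T g i = 0 := (pbPhi_zero_iff T g i).mpr hi
    rw [this, pow_one]
  have h2 : ∏ i ∈ Tᶜ, (2:ENNReal)⁻¹ ^ (pbPhi T g i + 1)
      = (2:ENNReal)⁻¹ ^ (Tᶜ.card) * pbW g := by
    rw [← Finset.prod_coe_sort]
    have hstep : ∀ i : {i // i ∈ Tᶜ}, (2:ENNReal)⁻¹ ^ (pbPhi T g i.1 + 1)
        = 2⁻¹ * (2:ENNReal)⁻¹ ^ (g i + 1) := by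
      intro i
      rw [pbPhi_apply_compl, pow_succ']
    rw [Finset.prod_congr rfl (fun i _ => hstep i), Finset.prod_mul_distrib,
      Finset.prod_const, pbW]
    congr 2
    rw [Finset.card_univ, Fintype.card_coe]
  rw [h1, h2, ← mul_assoc, ← pow_add]
  congr 2
  rw [Finset.card_add_card_compl]
  simp

lemma pbPhi_E (T : Finset (Fin n)) (g : {i // i ∈ Tᶜ} → ℕ) :
    pbE (pbPhi T g) ↔ (Even T.card ∧ pbE g) := by
  have hfib0 : Finset.univ.filter (fun i => pbPhi T g i = 0) = T := by
    ext i; simp [pbPhi_zero_iff]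
  have hfibS : ∀ m : ℕ,
      (Finset.univ.filter (fun i => pbPhi T g i = m + 1)).card
        = (Finset.univ.filter (fun i => g i = m)).card := by
    intro m
    have hmem : ∀ i : Fin n, pbPhi T g i = m + 1 → i ∈ Tᶜ := by
      intro i hi
      by_contra hc
      rw [pbPhi, dif_neg hc] at hi
      omega
    refine Finset.card_bij' (fun i hi => (⟨i, hmem i ?_⟩ : {i // i ∈ Tᶜ})) (fun i _ => i.1)
      ?_ ?_ ?_ ?_
    · simpa using hi
    · intro i hi
      simp only [Finset.mem_filter, Finset.mem_univ, true_and] at hi ⊢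
      have := pbPhi_apply_compl T g ⟨i, hmem i hi⟩
      simp only at this
      omega
    · intro i hi
      simp only [Finset.mem_filter, Finset.mem_univ, true_and] at hi ⊢
      rw [pbPhi_apply_compl T g i, hi]
    · intro i _; rfl
    · intro i _; rfl
  constructor
  · intro h
    refine ⟨?_, fun m => ?_⟩
    · have := h 0; rwa [hfib0] at this
    · have := h (m + 1); rwa [hfibS m] at this
  · rintro ⟨h1, h2⟩
    intro j
    cases j with
    | zero => rwa [hfib0]
    | succ m => rw [hfibS m]; exact h2 m

lemma pbQ_rec (n : ℕ) :
    pbQ (Fin n) = ∑ k ∈ Finset.range (n+1),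
      if Even k then (n.choose k : ENNReal) * (2:ENNReal)⁻¹ ^ n * pbQ (Fin (n-k)) else 0 := by
  have key : ∀ T : Finset (Fin n),
      (∑' f : Fin n → ℕ, if Finset.univ.filter (fun i => f i = 0) = T
          then (if pbE f then pbW f else 0) else 0)
      = if Even T.card then (2:ENNReal)⁻¹ ^ n * pbQ (Fin (n - T.card)) else 0 := by
    intro T
    rw [← Function.Injective.tsum_eq (pbPhi_inj T) ?hsupp]
    case hsupp =>
      intro f hf
      simp only [Function.mem_support, ne_eq, ite_eq_right_iff, not_forall] at hf
      exact (pbPhi_range T f).mpr hf.1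
    have heq : ∀ g : {i // i ∈ Tᶜ} → ℕ,
        (if Finset.univ.filter (fun i => pbPhi T g i = 0) = T
          then (if pbE (pbPhi T g) then pbW (pbPhi T g) else 0) else 0)
        = if Even T.card then (2:ENNReal)⁻¹ ^ n * (if pbE g then pbW g else 0) else 0 := by
      intro g
      rw [if_pos ((pbPhi_range T (pbPhi T g)).mp ⟨g, rfl⟩)]
      by_cases hT : Even T.card
      · rw [if_pos hT]
        by_cases hg : pbE g
        · rw [if_pos ((pbPhi_E T g).mpr ⟨hT, hg⟩), if_pos hg, pbPhi_W]
        · rw [if_neg (fun h => hg ((pbPhi_E T g).mp h).2), if_neg hg, mul_zero]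
      · rw [if_neg hT, if_neg (fun h => hT ((pbPhi_E T g).mp h).1)]
    rw [tsum_congr heq]
    by_cases hT : Even T.card
    · simp only [if_pos hT]
      rw [ENNReal.tsum_mul_left]
      congr 1
      have hcard : Fintype.card {i // i ∈ Tᶜ} = n - T.card := by
        simp [Finset.card_compl]
      rw [← pbQ, pbQ_equiv (Fintype.equivFinOfCardEq hcard)]
    · simp only [if_neg hT, tsum_zero]
  calc pbQ (Fin n)
      = ∑' f : Fin n → ℕ, ∑ T ∈ (Finset.univ : Finset (Finset (Fin n))),
          (if Finset.univ.filter (fun i => f i = 0) = T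
            then (if pbE f then pbW f else 0) else 0) := by
        rw [pbQ]
        refine tsum_congr fun f => ?_
        rw [Finset.sum_ite_eq Finset.univ (Finset.univ.filter fun i => f i = 0)
          (fun _ => if pbE f then pbW f else 0), if_pos (Finset.mem_univ _)]
    _ = ∑ T ∈ (Finset.univ : Finset (Finset (Fin n))),
          ∑' f : Fin n → ℕ, (if Finset.univ.filter (fun i => f i = 0) = T
            then (if pbE f then pbW f else 0) else 0) := by
        rw [Summable.tsum_finsetSum (fun T _ => ENNReal.summable)]
    _ = ∑ T ∈ (Finset.univ : Finset (Finset (Fin n))),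
          (if Even T.card then (2:ENNReal)⁻¹ ^ n * pbQ (Fin (n - T.card)) else 0) := by
        exact Finset.sum_congr rfl fun T _ => key T
    _ = ∑ k ∈ Finset.range (n+1), (n.choose k) •
          (if Even k then (2:ENNReal)⁻¹ ^ n * pbQ (Fin (n - k)) else 0) := by
        rw [← Finset.powerset_univ, Finset.sum_powerset_apply_card
          (fun k => if Even k then (2:ENNReal)⁻¹ ^ n * pbQ (Fin (n - k)) else 0)]
        simp
    _ = ∑ k ∈ Finset.range (n+1),
          if Even k then (n.choose k : ENNReal) * (2:ENNReal)⁻¹ ^ n * pbQ (Fin (n-k)) else 0 := by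
        refine Finset.sum_congr rfl fun k _ => ?_
        by_cases hk : Even k
        · rw [if_pos hk, if_pos hk, nsmul_eq_mul, mul_assoc]
        · rw [if_neg hk, if_neg hk, smul_zero]

end Rec

lemma even_choose_sum (m : ℕ) (hm : 1 ≤ m) :
    2 * (∑ k ∈ Finset.range (m+1), if Even k then m.choose k else 0) = 2^m := by
  have h1 : ∑ k ∈ Finset.range (m+1), ((-1:ℤ)^k * m.choose k) = 0 :=
    Int.alternating_sum_range_choose_of_ne (by omega)
  have h2 : ∑ k ∈ Finset.range (m+1), (m.choose k : ℤ) = 2^m := by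
    exact_mod_cast Nat.sum_range_choose m
  have key : (2 * (∑ k ∈ Finset.range (m+1), if Even k then (m.choose k : ℤ) else 0)) = 2^m := by
    rw [Finset.mul_sum]
    have hterm : ∀ k, (2 * if Even k then (m.choose k : ℤ) else 0)
        = (m.choose k : ℤ) + (-1:ℤ)^k * m.choose k := by
      intro k
      by_cases hk : Even k
      · rw [if_pos hk, hk.neg_one_pow]; ring
      · rw [if_neg hk, (Nat.not_even_iff_odd.mp hk).neg_one_pow]; ring
    rw [Finset.sum_congr rfl (fun k _ => hterm k), Finset.sum_add_distrib, h1, h2, add_zero]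
  have := key
  push_cast at this
  exact_mod_cast this

lemma even_choose_sub_sum {n : ℕ} (hn : Even n) :
    (∑ k ∈ Finset.range (n+1), if Even k ∧ 1 ≤ k then (n+1).choose k else 0) = 2^n - 1 := by
  have hA : ∑ k ∈ Finset.range (n+2), (if Even k then (n+1).choose k else 0) = 2^n := by
    have h := even_choose_sum (n+1) (by omega)
    rw [pow_succ] at h
    have h' : 2 * (∑ k ∈ Finset.range (n+2), if Even k then (n+1).choose k else 0)
        = 2^n * 2 := h
    omega
  have hsplit : ∑ k ∈ Finset.range (n+2), (if Even k then (n+1).choose k else 0)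
      = (∑ k ∈ Finset.range (n+1), if Even k then (n+1).choose k else 0)
        + (if Even (n+1) then (n+1).choose (n+1) else 0) := Finset.sum_range_succ _ _
  have hodd : ¬ Even (n+1) := fun h => (Nat.even_add_one.mp h) hn
  rw [hsplit, if_neg hodd, add_zero] at hA
  have hterm : ∀ k, (if Even k then (n+1).choose k else 0)
      = (if k = 0 then 1 else 0) + (if Even k ∧ 1 ≤ k then (n+1).choose k else 0) := by
    intro k
    by_cases hk0 : k = 0
    · subst hk0; simp
    · have h1 : (if k = 0 then (1:ℕ) else 0) = 0 := if_neg hk0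
      rw [h1, zero_add]
      by_cases he : Even k
      · rw [if_pos he, if_pos ⟨he, by omega⟩]
      · rw [if_neg he, if_neg (fun h => he h.1)]
  rw [Finset.sum_congr rfl (fun k _ => hterm k), Finset.sum_add_distrib] at hA
  have h0 : (∑ k ∈ Finset.range (n+1), if k = 0 then 1 else 0) = 1 := by
    rw [Finset.sum_ite_eq' (Finset.range (n+1)) 0 (fun _ => 1),
      if_pos (Finset.mem_range.mpr (by omega))]
  rw [h0] at hA
  omega

lemma closed_arith (n : ℕ) (hn : 1 ≤ n) :
    (if Even n then ((n : ENNReal) + 1)⁻¹ else 0) * (1 - (2:ENNReal)⁻¹ ^ n)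
      = ∑ k ∈ Finset.range (n + 1),
          if Even k ∧ 1 ≤ k
          then (n.choose k : ENNReal) * (2:ENNReal)⁻¹ ^ n *
            (if Even (n - k) then ((↑(n - k) : ENNReal) + 1)⁻¹ else 0)
          else 0 := by
  by_cases hne : Even n
  · rw [if_pos hne]
    have hterm : ∀ k ∈ Finset.range (n+1),
        (if Even k ∧ 1 ≤ k
          then (n.choose k : ENNReal) * (2:ENNReal)⁻¹ ^ n *
            (if Even (n - k) then ((↑(n - k) : ENNReal) + 1)⁻¹ else 0)
          else 0)
        = (if Even k ∧ 1 ≤ k then (((n+1).choose k : ℕ) : ENNReal) else 0)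
            * ((2:ENNReal)⁻¹ ^ n * ((n : ENNReal) + 1)⁻¹) := by
      intro k hk
      by_cases h : Even k ∧ 1 ≤ k
      · rw [if_pos h, if_pos h]
        have hkn : k ≤ n := by
          have := Finset.mem_range.mp hk; omega
        have hnk : Even (n - k) := hne.tsub h.1
        rw [if_pos hnk]
        have hcast1 : ((↑(n - k) : ENNReal) + 1) = ((n - k + 1 : ℕ) : ENNReal) := by
          push_cast; ring
        have hcast2 : ((n : ENNReal) + 1) = ((n + 1 : ℕ) : ENNReal) := by
          push_cast; ring
        have hdiv : (n.choose k : ENNReal) / ((n - k + 1 : ℕ) : ENNReal)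
            = (((n+1).choose k : ℕ) : ENNReal) / ((n + 1 : ℕ) : ENNReal) := by
          rw [ENNReal.div_eq_div_iff (by exact_mod_cast Nat.succ_ne_zero n)
            (by exact ENNReal.natCast_ne_top _)
            (by exact_mod_cast Nat.succ_ne_zero (n - k))
            (by exact ENNReal.natCast_ne_top _)]
          have hnat : (n + 1) * n.choose k = (n - k + 1) * ((n + 1).choose k) := by
            have h1 := Nat.choose_mul_succ_eq n k
            have hsub : n + 1 - k = n - k + 1 := by omega
            rw [hsub] at h1
            rw [mul_comm (n+1), h1, mul_comm]
          exact_mod_cast hnat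
        rw [hcast1]
        calc (n.choose k : ENNReal) * (2:ENNReal)⁻¹ ^ n * (((n - k + 1 : ℕ) : ENNReal))⁻¹
            = ((n.choose k : ENNReal) / ((n - k + 1 : ℕ) : ENNReal)) * (2:ENNReal)⁻¹ ^ n := by
              rw [div_eq_mul_inv]; ring
          _ = ((((n+1).choose k : ℕ) : ENNReal) / ((n + 1 : ℕ) : ENNReal)) * (2:ENNReal)⁻¹ ^ n := by
              rw [hdiv]
          _ = (((n+1).choose k : ℕ) : ENNReal) * ((2:ENNReal)⁻¹ ^ n * ((n : ENNReal) + 1)⁻¹) := by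
              rw [div_eq_mul_inv]; push_cast; ring
      · rw [if_neg h, if_neg h, zero_mul]
    rw [Finset.sum_congr rfl hterm, ← Finset.sum_mul]
    have hs : (∑ k ∈ Finset.range (n+1), if Even k ∧ 1 ≤ k then (((n+1).choose k : ℕ) : ENNReal) else 0)
        = ((2^n - 1 : ℕ) : ENNReal) := by
      rw [← even_choose_sub_sum hne]
      rw [Nat.cast_sum]
      refine Finset.sum_congr rfl fun k _ => ?_
      by_cases h : Even k ∧ 1 ≤ k
      · rw [if_pos h, if_pos h]
      · rw [if_neg h, if_neg h, Nat.cast_zero]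
    rw [hs]
    have hcast : ((2^n - 1 : ℕ) : ENNReal) = (2:ENNReal)^n - 1 := by
      rw [ENNReal.natCast_sub]
      push_cast
      ring_nf
    rw [hcast]
    have hmul : ((2:ENNReal)^n - 1) * (2:ENNReal)⁻¹ ^ n = 1 - (2:ENNReal)⁻¹ ^ n := by
      rw [ENNReal.sub_mul (fun _ _ => ENNReal.pow_ne_top (ENNReal.inv_ne_top.mpr two_ne_zero)),
        one_mul, ← mul_pow, ENNReal.mul_inv_cancel two_ne_zero ENNReal.ofNat_ne_top, one_pow]
    rw [← mul_assoc, hmul, mul_comm]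
  · rw [if_neg hne, zero_mul]
    symm
    apply Finset.sum_eq_zero
    intro k hk
    by_cases h : Even k ∧ 1 ≤ k
    · rw [if_pos h, if_neg, mul_zero]
      have hkn : k ≤ n := by have := Finset.mem_range.mp hk; omega
      exact Nat.not_even_iff_odd.mpr (Nat.Odd.sub_even hkn (Nat.not_even_iff_odd.mp hne) h.1)
    · rw [if_neg h]

lemma card_filter_range (n : ℕ) (P : ℕ → Prop) [DecidablePred P] :
    ((Finset.range n).filter P).card
      = (Finset.univ.filter (fun i : Fin n => P i.1)).card := by
  rw [← Nat.Iio_eq_range, ← Fin.map_valEmbedding_univ, Finset.filter_map, Finset.card_map]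
  rfl

lemma Ibox_subset (j : ℕ) :
    Set.Ico (1 - (2:ℝ)⁻¹ ^ j) (1 - (2:ℝ)⁻¹ ^ (j + 1)) ⊆ Set.Ico (0:ℝ) 1 := by
  intro x hx
  have h1 : (2:ℝ)⁻¹ ^ j ≤ 1 := pow_le_one₀ (by norm_num) (by norm_num)
  have h2 : (0:ℝ) < (2:ℝ)⁻¹ ^ (j+1) := by positivity
  exact ⟨by linarith [hx.1], by linarith [hx.2]⟩

lemma Ibox_uniq {x : ℝ} {j k : ℕ}
    (hj : x ∈ Set.Ico (1 - (2:ℝ)⁻¹ ^ j) (1 - (2:ℝ)⁻¹ ^ (j + 1)))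
    (hk : x ∈ Set.Ico (1 - (2:ℝ)⁻¹ ^ k) (1 - (2:ℝ)⁻¹ ^ (k + 1))) : j = k := by
  have key : ∀ a b : ℕ, a < b →
      x ∈ Set.Ico (1 - (2:ℝ)⁻¹ ^ a) (1 - (2:ℝ)⁻¹ ^ (a + 1)) →
      x ∈ Set.Ico (1 - (2:ℝ)⁻¹ ^ b) (1 - (2:ℝ)⁻¹ ^ (b + 1)) → False := by
    intro a b hab ha hb
    have h1 : (2:ℝ)⁻¹ ^ b ≤ (2:ℝ)⁻¹ ^ (a+1) :=
      pow_le_pow_of_le_one (by norm_num) (by norm_num) (by omega)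
    have := ha.2
    have := hb.1
    linarith
  rcases lt_trichotomy j k with h | h | h
  · exact absurd (key j k h hj hk) (by simp)
  · exact h
  · exact absurd (key k j h hk hj) (by simp)

lemma Ibox_cover {x : ℝ} (hx : x ∈ Set.Ico (0:ℝ) 1) :
    ∃ j, x ∈ Set.Ico (1 - (2:ℝ)⁻¹ ^ j) (1 - (2:ℝ)⁻¹ ^ (j + 1)) := by
  have hex : ∃ j : ℕ, x < 1 - (2:ℝ)⁻¹ ^ (j + 1) := by
    obtain ⟨m, hm⟩ := exists_pow_lt_of_lt_one (show (0:ℝ) < 1 - x by linarith [hx.2])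
      (show (2:ℝ)⁻¹ < 1 by norm_num)
    refine ⟨m, ?_⟩
    have h1 : (2:ℝ)⁻¹ ^ (m+1) ≤ (2:ℝ)⁻¹ ^ m :=
      pow_le_pow_of_le_one (by norm_num) (by norm_num) (by omega)
    linarith
  refine ⟨Nat.find hex, ?_, Nat.find_spec hex⟩
  by_cases hj0 : Nat.find hex = 0
  · rw [hj0]
    simpa using hx.1
  · obtain ⟨j', hj'⟩ := Nat.exists_eq_succ_of_ne_zero hj0
    have hmin := Nat.find_min hex (m := j') (by omega)
    push_neg at hmin
    rw [hj']
    exact hmin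

lemma pb_meas {Ω : Type*} [MeasurableSpace Ω] (μ : MeasureTheory.Measure Ω)
    [MeasureTheory.IsProbabilityMeasure μ]
    (U : ℕ → Ω → ℝ) (hmeas : ∀ i, Measurable (U i))
    (hindep : ProbabilityTheory.iIndepFun U μ)
    (hunif : ∀ i, MeasureTheory.Measure.map (U i) μ
      = MeasureTheory.volume.restrict (Set.Icc (0:ℝ) 1))
    (n : ℕ) :
    μ {ω | ∀ j : ℕ, Even ((Finset.range n).filter
        (fun i =>
          U i ω ∈ Set.Ico (1 - (2:ℝ)⁻¹ ^ j) (1 - (2:ℝ)⁻¹ ^ (j + 1)))).card}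
      = pbQ (Fin n) := by
  classical
  set I : ℕ → Set ℝ := fun j => Set.Ico (1 - (2:ℝ)⁻¹ ^ j) (1 - (2:ℝ)⁻¹ ^ (j + 1)) with hI
  -- measure of preimages
  have hpre : ∀ (i : ℕ) (s : Set ℝ), MeasurableSet s →
      μ (U i ⁻¹' s) = MeasureTheory.volume (s ∩ Set.Icc (0:ℝ) 1) := by
    intro i s hs
    rw [← MeasureTheory.Measure.map_apply (hmeas i) hs, hunif i,
      MeasureTheory.Measure.restrict_apply hs]
  have hval : ∀ (i j : ℕ), μ (U i ⁻¹' I j) = (2:ENNReal)⁻¹ ^ (j + 1) := by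
    intro i j
    rw [hpre i _ measurableSet_Ico]
    have hss : I j ∩ Set.Icc (0:ℝ) 1 = I j :=
      Set.inter_eq_left.mpr ((Ibox_subset j).trans Set.Ico_subset_Icc_self)
    rw [hss, hI]
    simp only [Real.volume_Ico]
    have harith : (1 - (2:ℝ)⁻¹ ^ (j+1)) - (1 - (2:ℝ)⁻¹ ^ j) = (2:ℝ)⁻¹ ^ (j+1) := by
      rw [pow_succ]; ring
    rw [harith, ENNReal.ofReal_pow (by norm_num), ENNReal.ofReal_inv_of_pos (by norm_num)]
    norm_num
  have hone : ∀ i : ℕ, μ {ω | U i ω ∉ Set.Ico (0:ℝ) 1} = 0 := by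
    intro i
    have h1 : μ (U i ⁻¹' Set.Ico (0:ℝ) 1) = 1 := by
      rw [hpre i _ measurableSet_Ico]
      have : Set.Ico (0:ℝ) 1 ∩ Set.Icc (0:ℝ) 1 = Set.Ico (0:ℝ) 1 :=
        Set.inter_eq_left.mpr Set.Ico_subset_Icc_self
      rw [this]
      simp
    have h2 : {ω | U i ω ∉ Set.Ico (0:ℝ) 1} = (U i ⁻¹' Set.Ico (0:ℝ) 1)ᶜ := rfl
    rw [h2, MeasureTheory.prob_compl_eq_one_sub ((hmeas i) measurableSet_Ico), h1, tsub_self]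
  -- the cylinder sets
  set A : (Fin n → ℕ) → Set Ω := fun f => ⋂ i : Fin n, U i.1 ⁻¹' I (f i) with hA
  have hAmeas : ∀ f, MeasurableSet (A f) := by
    intro f
    exact MeasurableSet.iInter fun i => (hmeas i.1) measurableSet_Ico
  have hAval : ∀ f, μ (A f) = pbW f := by
    intro f
    have hsets : A f = ⋂ i ∈ Finset.range n, U i ⁻¹'
        (fun i => if h : i < n then I (f ⟨i, h⟩) else Set.univ) i := by
      ext ω
      simp only [hA, Set.mem_iInter, Finset.mem_range, Set.mem_preimage]
      constructor
      · intro h i hi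
        rw [dif_pos hi]
        exact h ⟨i, hi⟩
      · intro h i
        have := h i.1 i.isLt
        rwa [dif_pos i.isLt, Fin.eta] at this
    rw [hsets, hindep.measure_inter_preimage_eq_mul (Finset.range n)
      (fun i _ => by
        by_cases h : i < n
        · simp only [dif_pos h]; exact measurableSet_Ico
        · simp only [dif_neg h]; exact MeasurableSet.univ)]
    rw [pbW, ← Fin.prod_univ_eq_prod_range
      (fun i => μ (U i ⁻¹' if h : i < n then I (f ⟨i, h⟩) else Set.univ)) n]
    refine Finset.prod_congr rfl fun i _ => ?_
    have h1 : (if h : i.1 < n then I (f ⟨i.1, h⟩) else Set.univ) = I (f i) := by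
      rw [dif_pos i.isLt, Fin.eta]
    rw [h1, hval]
  -- fiber counting on cylinder sets
  have hAcount : ∀ (f : Fin n → ℕ) (ω : Ω), ω ∈ A f → ∀ j : ℕ,
      ((Finset.range n).filter (fun i => U i ω ∈ I j)).card
        = (Finset.univ.filter (fun i : Fin n => f i = j)).card := by
    intro f ω hω j
    rw [card_filter_range n (fun i => U i ω ∈ I j)]
    congr 1
    apply Finset.filter_congr
    intro i _
    have hωi : ∀ i : Fin n, U i.1 ω ∈ I (f i) := fun i => by
      have := Set.mem_iInter.mp hω i
      exact this
    have h'' : U i.1 ω ∈ Set.Ico (1 - (2:ℝ)⁻¹ ^ (f i)) (1 - (2:ℝ)⁻¹ ^ (f i + 1)) := hωi i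
    constructor
    · intro h
      have h' : U i.1 ω ∈ Set.Ico (1 - (2:ℝ)⁻¹ ^ j) (1 - (2:ℝ)⁻¹ ^ (j + 1)) := h
      exact Ibox_uniq h'' h'
    · intro h
      rw [← h]
      exact hωi i
  set E : Set Ω := {ω | ∀ j : ℕ,
      Even ((Finset.range n).filter (fun i => U i ω ∈ I j)).card} with hE
  set N : Set Ω := ⋃ i : Fin n, {ω | U i.1 ω ∉ Set.Ico (0:ℝ) 1} with hN
  have hNnull : μ N = 0 := MeasureTheory.measure_iUnion_null fun i => hone i.1
  set S : Set Ω := ⋃ f : {f : Fin n → ℕ | pbE f}, A f.1 with hS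
  have hSE : S ⊆ E := by
    intro ω hω
    obtain ⟨f, hf⟩ := Set.mem_iUnion.mp hω
    intro j
    rw [hAcount f.1 ω hf j]
    exact f.2 j
  have hES : ∀ ω ∈ E, ω ∉ N → ω ∈ S := by
    intro ω hωE hωN
    have hbox : ∀ i : Fin n, ∃ j, U i.1 ω ∈ I j := by
      intro i
      apply Ibox_cover
      by_contra hc
      exact hωN (Set.mem_iUnion.mpr ⟨i, hc⟩)
    choose f hf using hbox
    have hωA : ω ∈ A f := Set.mem_iInter.mpr fun i => hf i
    have hfE : pbE f := fun j => by rw [← hAcount f ω hωA j]; exact hωE j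
    exact Set.mem_iUnion.mpr ⟨⟨f, hfE⟩, hωA⟩
  have hmeasE : μ E = μ S := by
    apply le_antisymm
    · have hsub : E ⊆ S ∪ N := fun ω hω => by
        by_cases h : ω ∈ N
        · exact Or.inr h
        · exact Or.inl (hES ω hω h)
      calc μ E ≤ μ (S ∪ N) := MeasureTheory.measure_mono hsub
        _ ≤ μ S + μ N := MeasureTheory.measure_union_le _ _
        _ = μ S := by rw [hNnull, add_zero]
    · exact MeasureTheory.measure_mono hSE
  have hdisj : Pairwise (Function.onFun Disjoint
      (fun f : {f : Fin n → ℕ | pbE f} => A f.1)) := by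
    intro f g hfg
    rw [Function.onFun, Set.disjoint_left]
    intro ω hωf hωg
    apply hfg
    apply Subtype.ext
    funext i
    have h1 : U i.1 ω ∈ Set.Ico (1 - (2:ℝ)⁻¹ ^ (f.1 i)) (1 - (2:ℝ)⁻¹ ^ (f.1 i + 1)) :=
      Set.mem_iInter.mp hωf i
    have h2 : U i.1 ω ∈ Set.Ico (1 - (2:ℝ)⁻¹ ^ (g.1 i)) (1 - (2:ℝ)⁻¹ ^ (g.1 i + 1)) :=
      Set.mem_iInter.mp hωg i
    exact Ibox_uniq h1 h2
  have hμS : μ S = ∑' f : {f : Fin n → ℕ | pbE f}, μ (A f.1) :=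
    MeasureTheory.measure_iUnion hdisj fun f => hAmeas f.1
  have hfinal : (∑' f : {f : Fin n → ℕ | pbE f}, pbW f.1) = pbQ (Fin n) := by
    rw [tsum_subtype {f : Fin n → ℕ | pbE f} pbW, pbQ]
    refine tsum_congr fun f => ?_
    by_cases h : pbE f
    · simp [Set.indicator_apply, Set.mem_setOf_eq, h]
    · simp [Set.indicator_apply, Set.mem_setOf_eq, h]
  have hgoal : μ E = pbQ (Fin n) := by
    rw [hmeasE, hμS, ← hfinal]
    exact tsum_congr fun f => hAval f.1
  exact hgoal

end PaintboxAux

/-- Let `p n` be the probability that every block of the geometric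
paintbox partition of `{1,…,n}` (box `j` has probability `2⁻ʲ⁻¹`, realized
as the interval `[1 − 2⁻ʲ, 1 − 2⁻ʲ⁻¹)` for i.i.d. uniform `U i`) has even
cardinality.  Then `p 0 = 1`, `p` satisfies the recursion
`p n · (1 − 2⁻ⁿ) = ∑_{1 ≤ k ≤ n, k even} C(n,k) 2⁻ⁿ p (n − k)`,
and `p n = 1/(n+1)` for even `n` and `0` for odd `n`. -/
theorem paintbox_recursion
    {Ω : Type*} [MeasurableSpace Ω] (μ : Measure Ω) [IsProbabilityMeasure μ]
    (U : ℕ → Ω → ℝ) (hmeas : ∀ i, Measurable (U i))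
    (hindep : iIndepFun U μ)
    (hunif : ∀ i, Measure.map (U i) μ = volume.restrict (Set.Icc (0:ℝ) 1))
    (p : ℕ → ENNReal)
    (hp : ∀ n, p n = μ {ω | ∀ j : ℕ, Even ((Finset.range n).filter
        (fun i =>
          U i ω ∈ Set.Ico (1 - (2:ℝ)⁻¹ ^ j) (1 - (2:ℝ)⁻¹ ^ (j + 1)))).card}) :
    p 0 = 1 ∧
    (∀ n : ℕ, 1 ≤ n → p n * (1 - (2 : ENNReal)⁻¹ ^ n)
        = ∑ k ∈ Finset.range (n + 1),
            if Even k ∧ 1 ≤ k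
            then (n.choose k : ENNReal) * (2 : ENNReal)⁻¹ ^ n * p (n - k)
            else 0) ∧
    (∀ n : ℕ, p n = if Even n then ((n : ENNReal) + 1)⁻¹ else 0) := by
  have hq : ∀ n, p n = pbQ (Fin n) := fun n =>
    (hp n).trans (pb_meas μ U hmeas hindep hunif n)
  have hfin : ∀ n, p n ≠ ⊤ := fun n => by
    rw [hp n]; exact MeasureTheory.measure_ne_top μ _
  have h0 : p 0 = 1 := by
    rw [hq 0]; exact pbQ_eq_one (Fin 0)
  have hrec : ∀ n : ℕ, 1 ≤ n → p n * (1 - (2 : ENNReal)⁻¹ ^ n)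
      = ∑ k ∈ Finset.range (n + 1),
          if Even k ∧ 1 ≤ k
          then (n.choose k : ENNReal) * (2 : ENNReal)⁻¹ ^ n * p (n - k)
          else 0 := by
    intro n hn
    have h1 : p n = ∑ k ∈ Finset.range (n+1),
        if Even k then (n.choose k : ENNReal) * (2:ENNReal)⁻¹ ^ n * p (n-k) else 0 := by
      rw [hq n, pbQ_rec n]
      refine Finset.sum_congr rfl fun k _ => ?_
      by_cases hk : Even k
      · rw [if_pos hk, if_pos hk, hq (n-k)]
      · rw [if_neg hk, if_neg hk]
    have h2 : ∀ k ∈ Finset.range (n+1),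
        (if Even k then (n.choose k : ENNReal) * (2:ENNReal)⁻¹ ^ n * p (n-k) else 0)
        = (if k = 0 then (2:ENNReal)⁻¹ ^ n * p n else 0)
          + (if Even k ∧ 1 ≤ k
              then (n.choose k : ENNReal) * (2:ENNReal)⁻¹ ^ n * p (n-k) else 0) := by
      intro k _
      by_cases hk0 : k = 0
      · subst hk0
        simp
      · rw [if_neg hk0, zero_add]
        by_cases he : Even k
        · rw [if_pos he, if_pos ⟨he, by omega⟩]
        · rw [if_neg he, if_neg (fun h => he h.1)]
    rw [Finset.sum_congr rfl h2, Finset.sum_add_distrib] at h1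
    have h3 : (∑ k ∈ Finset.range (n+1), if k = 0 then (2:ENNReal)⁻¹ ^ n * p n else 0)
        = (2:ENNReal)⁻¹ ^ n * p n := by
      rw [Finset.sum_ite_eq' (Finset.range (n+1)) 0 (fun _ => (2:ENNReal)⁻¹ ^ n * p n),
        if_pos (Finset.mem_range.mpr (by omega))]
    rw [h3] at h1
    have h4 : p n * (1 - (2:ENNReal)⁻¹ ^ n) = p n - (2:ENNReal)⁻¹ ^ n * p n := by
      rw [ENNReal.mul_sub (fun _ _ => hfin n), mul_one, mul_comm (p n)]
    rw [h4]
    nth_rewrite 1 [h1]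
    rw [ENNReal.add_sub_cancel_left
      (ENNReal.mul_ne_top (ENNReal.pow_ne_top (ENNReal.inv_ne_top.mpr two_ne_zero)) (hfin n))]
  refine ⟨h0, hrec, ?_⟩
  intro n
  induction n using Nat.strong_induction_on with
  | _ n ih =>
    rcases Nat.eq_zero_or_pos n with hn0 | hn1
    · subst hn0
      rw [h0, if_pos Even.zero]
      simp
    · have hrn := hrec n hn1
      have hsum : (∑ k ∈ Finset.range (n + 1),
          if Even k ∧ 1 ≤ k
          then (n.choose k : ENNReal) * (2 : ENNReal)⁻¹ ^ n * p (n - k)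
          else 0)
          = ∑ k ∈ Finset.range (n + 1),
          if Even k ∧ 1 ≤ k
          then (n.choose k : ENNReal) * (2 : ENNReal)⁻¹ ^ n *
            (if Even (n - k) then ((↑(n - k) : ENNReal) + 1)⁻¹ else 0)
          else 0 := by
        refine Finset.sum_congr rfl fun k hk => ?_
        by_cases h : Even k ∧ 1 ≤ k
        · rw [if_pos h, if_pos h, ih (n - k) (by omega)]
        · rw [if_neg h, if_neg h]
      rw [hsum, ← closed_arith n hn1] at hrn
      have hlt : (2:ENNReal)⁻¹ ^ n < 1 := by
        rw [← ENNReal.inv_pow]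
        apply ENNReal.inv_lt_one.mpr
        exact one_lt_pow₀ (by norm_num) (by omega)
      have hne0 : (1 - (2:ENNReal)⁻¹ ^ n) ≠ 0 := by
        rw [ne_eq, tsub_eq_zero_iff_le]
        exact not_le.mpr hlt
      have hnetop : (1 - (2:ENNReal)⁻¹ ^ n) ≠ ⊤ :=
        ne_top_of_le_ne_top ENNReal.one_ne_top tsub_le_self
      exact (ENNReal.mul_left_inj hne0 hnetop).mp hrn
end
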